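/- arXiv:2302.09538 — 7 statements merged into one kernel-verified Lean document; each statement's English description precedes it below -/
import Mathlib

section
/- Let Φ be a Young function with right-continuous inverse Φ^{-1}, let 0 ≤ λ ≤ 1 and t > 0. Then the central Morrey–Orlicz norm of the characteristic function of the ball B_t satisfies ‖χ_{B_t}‖_{M^{Φ,λ}(0)} = 1 / Φ^{-1}(|B_t|^{λ−1}). -/
open MeasureTheory ENNReal

noncomputable section

/-- A Young function: `Φ : [0,∞) → [0,∞]` nondecreasing, convex, `Φ(0)=0`,
`lim_{u→0+} Φ(u) = 0`, not identically `0` or `∞` on `(0,∞)`, and left continuous. -/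
structure IsYoungFunction (Φ : ℝ → ℝ≥0∞) : Prop where
  zero : Φ 0 = 0
  mono : MonotoneOn Φ (Set.Ici 0)
  convex : ∀ u ∈ Set.Ici (0:ℝ), ∀ v ∈ Set.Ici (0:ℝ), ∀ t : ℝ, 0 ≤ t → t ≤ 1 →
    Φ (t * u + (1 - t) * v) ≤ ENNReal.ofReal t * Φ u + ENNReal.ofReal (1 - t) * Φ v
  tendsto_zero : Filter.Tendsto Φ (nhdsWithin 0 (Set.Ioi 0)) (nhds 0)
  left_continuous : ∀ u : ℝ, 0 < u → Filter.Tendsto Φ (nhdsWithin u (Set.Iio u)) (nhds (Φ u))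
  not_trivially_zero : ∃ u : ℝ, 0 < u ∧ Φ u ≠ 0
  not_trivially_top : ∃ u : ℝ, 0 < u ∧ Φ u ≠ ⊤

/-- The complementary Young function `Φ*(v) = sup_{u>0} (uv - Φ(u))`. -/
def complementaryYoung (Φ : ℝ → ℝ≥0∞) (v : ℝ) : ℝ≥0∞ :=
  ⨆ u : {u : ℝ // 0 < u}, (ENNReal.ofReal (u.1 * v) - Φ u.1)

/-- The right-continuous inverse `Φ⁻¹(v) = inf {u ≥ 0 : Φ(u) > v}` (with `inf ∅ = ∞`). -/
def rcInv (Φ : ℝ → ℝ≥0∞) (v : ℝ≥0∞) : ℝ≥0∞ :=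
  sInf {w : ℝ≥0∞ | ∃ u : ℝ, 0 ≤ u ∧ w = ENNReal.ofReal u ∧ v < Φ u}

/-- The Luxemburg-type functional
`‖f‖_{Φ,λ,B_r} = inf {ε > 0 : (1/|B_r|^λ) ∫_{B_r} Φ(|f(x)|/ε) dx ≤ 1}`. -/
def luxNorm (n : ℕ) (Φ : ℝ → ℝ≥0∞) (lam r : ℝ)
    (f : EuclideanSpace ℝ (Fin n) → ℝ) : ℝ≥0∞ :=
  sInf {ε : ℝ≥0∞ | ∃ e : ℝ, 0 < e ∧ ε = ENNReal.ofReal e ∧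
    (∫⁻ x in Metric.ball (0 : EuclideanSpace ℝ (Fin n)) r, Φ (|f x| / e))
      ≤ ENNReal.ofReal
          ((volume (Metric.ball (0 : EuclideanSpace ℝ (Fin n)) r)).toReal ^ lam)}

/-- The central Morrey–Orlicz norm `‖f‖_{M^{Φ,λ}(0)} = sup_{r>0} ‖f‖_{Φ,λ,B_r}`. -/
def centralNorm (n : ℕ) (Φ : ℝ → ℝ≥0∞) (lam : ℝ)
    (f : EuclideanSpace ℝ (Fin n) → ℝ) : ℝ≥0∞ :=
  ⨆ r : {r : ℝ // 0 < r}, luxNorm n Φ lam r.1 f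

/-! For `χ = χ_{B_t}` one has `∫_{B_r} Φ(χ/ε) = Φ(1/ε) |B_t ∩ B_r|`. At `r = t` the Luxemburg
condition is therefore `Φ(1/ε) ≤ |B_t|^{λ-1}`, and for `0 ≤ λ ≤ 1` this implies the condition at
every other radius, because `|B_t|^{λ-1} min(|B_r|, |B_t|) ≤ |B_r|^λ`. So the supremum over `r` is
attained at `r = t`, and `inf {ε > 0 : Φ(1/ε) ≤ v} = 1 / Φ⁻¹(v)` by the definition of the
right-continuous inverse. -/

open Metric

/-- The Luxemburg functional of the constant `1` at level `v`. -/
def luxScale (Φ : ℝ → ℝ≥0∞) (v : ℝ≥0∞) : ℝ≥0∞ :=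
  sInf {ε : ℝ≥0∞ | ∃ e : ℝ, 0 < e ∧ ε = ENNReal.ofReal e ∧ Φ e⁻¹ ≤ v}

theorem luxScale_eq_one_div_rcInv {Φ : ℝ → ℝ≥0∞} (hΦ : MonotoneOn Φ (Set.Ici 0))
    (v : ℝ≥0∞) : luxScale Φ v = 1 / rcInv Φ v := by
  rw [one_div]
  apply le_antisymm
  · refine le_of_forall_gt_imp_ge_of_dense fun c hc => ?_
    rcases eq_or_ne c ⊤ with rfl | hc_top
    · exact le_top
    have he : 0 < c.toReal := ENNReal.toReal_pos (pos_of_gt hc).ne' hc_top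
    have hinv_lt : ENNReal.ofReal c.toReal⁻¹ < rcInv Φ v := by
      rwa [ofReal_inv_of_pos he, ofReal_toReal hc_top, ← ENNReal.inv_lt_iff_inv_lt]
    have hΦ_le : Φ c.toReal⁻¹ ≤ v := by
      by_contra! hlt
      exact hinv_lt.not_ge (sInf_le ⟨_, (inv_pos.2 he).le, rfl, hlt⟩)
    calc luxScale Φ v ≤ ENNReal.ofReal c.toReal := sInf_le ⟨_, he, rfl, hΦ_le⟩
      _ = c := ofReal_toReal hc_top
  · refine le_sInf ?_
    rintro _ ⟨e, he, rfl, hΦ_le⟩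
    rw [ENNReal.inv_le_iff_inv_le, ← ofReal_inv_of_pos he]
    refine le_sInf ?_
    rintro _ ⟨u, hu, rfl, hlt⟩
    refine ENNReal.ofReal_le_ofReal (not_lt.1 fun hue => ?_)
    exact (hlt.trans_le ((hΦ hu (inv_pos.2 he).le hue.le).trans hΦ_le)).false

theorem setLIntegral_indicator_one_div {α : Type*} [MeasurableSpace α] (μ : Measure α)
    {Φ : ℝ → ℝ≥0∞} (hΦ0 : Φ 0 = 0) {s : Set α} (hs : MeasurableSet s) (u : Set α) (e : ℝ) :
    ∫⁻ x in u, Φ (|s.indicator (fun _ => (1 : ℝ)) x| / e) ∂μ = Φ e⁻¹ * μ (s ∩ u) := by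
  have hfun : (fun x => Φ (|s.indicator (fun _ => (1 : ℝ)) x| / e))
      = s.indicator fun _ => Φ e⁻¹ := by
    ext x
    by_cases hx : x ∈ s <;> simp [hx, hΦ0]
  rw [hfun, lintegral_indicator_const hs, Measure.restrict_apply hs]

theorem rpow_sub_one_mul_min_le_rpow {x y lam : ℝ} (hx : 0 < x) (hy : 0 < y)
    (hlam0 : 0 ≤ lam) (hlam1 : lam ≤ 1) : y ^ (lam - 1) * min x y ≤ x ^ lam := by
  rcases le_total x y with hxy | hyx
  · calc y ^ (lam - 1) * min x y ≤ x ^ (lam - 1) * x := by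
          rw [min_eq_left hxy]
          gcongr ?_ * _
          exact Real.rpow_le_rpow_of_nonpos hx hxy (by linarith)
      _ = x ^ lam := by rw [← Real.rpow_add_one hx.ne', sub_add_cancel]
  · calc y ^ (lam - 1) * min x y = y ^ lam := by
          rw [min_eq_right hyx, ← Real.rpow_add_one hy.ne', sub_add_cancel]
      _ ≤ x ^ lam := Real.rpow_le_rpow hy.le hyx hlam0

theorem ofReal_toReal_rpow_eq_mul {a : ℝ≥0∞} (ha0 : a ≠ 0) (ha_top : a ≠ ∞) (lam : ℝ) :
    ENNReal.ofReal (a.toReal ^ lam) = ENNReal.ofReal (a.toReal ^ (lam - 1)) * a := by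
  calc ENNReal.ofReal (a.toReal ^ lam)
        = ENNReal.ofReal (a.toReal ^ (lam - 1) * a.toReal) := by
          rw [← Real.rpow_add_one (ENNReal.toReal_ne_zero.2 ⟨ha0, ha_top⟩), sub_add_cancel]
    _ = ENNReal.ofReal (a.toReal ^ (lam - 1)) * a := by
          rw [ENNReal.ofReal_mul (Real.rpow_nonneg ENNReal.toReal_nonneg _), ofReal_toReal ha_top]

section IndicatorBall

variable {n : ℕ} {Φ : ℝ → ℝ≥0∞} {lam t : ℝ}

theorem luxNorm_indicator_ball_self (hΦ0 : Φ 0 = 0) (ht : 0 < t) :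
    luxNorm n Φ lam t ((ball (0 : EuclideanSpace ℝ (Fin n)) t).indicator fun _ => (1 : ℝ))
      = luxScale Φ (ENNReal.ofReal ((volume (ball (0 : EuclideanSpace ℝ (Fin n)) t)).toReal
          ^ (lam - 1))) := by
  have hball_pos := measure_ball_pos (volume : Measure (EuclideanSpace ℝ (Fin n))) 0 ht
  unfold luxNorm luxScale
  simp_rw [setLIntegral_indicator_one_div volume hΦ0 measurableSet_ball, Set.inter_self,
    ofReal_toReal_rpow_eq_mul hball_pos.ne' measure_ball_lt_top.ne lam,
    ENNReal.mul_le_mul_iff_left hball_pos.ne' measure_ball_lt_top.ne]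

theorem luxNorm_indicator_ball_le_luxScale (hΦ0 : Φ 0 = 0) (hlam0 : 0 ≤ lam) (hlam1 : lam ≤ 1)
    {r : ℝ} (hr : 0 < r) (ht : 0 < t) :
    luxNorm n Φ lam r ((ball (0 : EuclideanSpace ℝ (Fin n)) t).indicator fun _ => (1 : ℝ))
      ≤ luxScale Φ (ENNReal.ofReal ((volume (ball (0 : EuclideanSpace ℝ (Fin n)) t)).toReal
          ^ (lam - 1))) := by
  set V : ℝ → ℝ := fun s => (volume (ball (0 : EuclideanSpace ℝ (Fin n)) s)).toReal
  have hV_pos {s : ℝ} (hs : 0 < s) : 0 < V s :=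
    ENNReal.toReal_pos (measure_ball_pos volume 0 hs).ne' measure_ball_lt_top.ne
  refine sInf_le_sInf ?_
  rintro _ ⟨e, he, rfl, hΦ_le⟩
  refine ⟨e, he, rfl, ?_⟩
  have hinter : volume (ball (0 : EuclideanSpace ℝ (Fin n)) t ∩ ball 0 r)
      ≤ ENNReal.ofReal (min (V r) (V t)) := by
    rw [ENNReal.ofReal_min, ofReal_toReal measure_ball_lt_top.ne,
      ofReal_toReal measure_ball_lt_top.ne]
    exact le_min (measure_mono Set.inter_subset_right) (measure_mono Set.inter_subset_left)
  rw [setLIntegral_indicator_one_div volume hΦ0 measurableSet_ball]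
  calc Φ e⁻¹ * volume (ball (0 : EuclideanSpace ℝ (Fin n)) t ∩ ball 0 r)
      ≤ ENNReal.ofReal (V t ^ (lam - 1)) * ENNReal.ofReal (min (V r) (V t)) :=
        mul_le_mul' hΦ_le hinter
    _ = ENNReal.ofReal (V t ^ (lam - 1) * min (V r) (V t)) :=
        (ENNReal.ofReal_mul (Real.rpow_nonneg (hV_pos ht).le _)).symm
    _ ≤ ENNReal.ofReal (V r ^ lam) :=
        ENNReal.ofReal_le_ofReal
          (rpow_sub_one_mul_min_le_rpow (hV_pos hr) (hV_pos ht) hlam0 hlam1)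

end IndicatorBall

theorem centralNorm_eq_luxNorm_of_forall_le {n : ℕ} {Φ : ℝ → ℝ≥0∞} {lam t : ℝ}
    {f : EuclideanSpace ℝ (Fin n) → ℝ} (ht : 0 < t)
    (hle : ∀ r, 0 < r → luxNorm n Φ lam r f ≤ luxNorm n Φ lam t f) :
    centralNorm n Φ lam f = luxNorm n Φ lam t f :=
  le_antisymm (iSup_le fun r => hle r.1 r.2)
    (le_iSup (fun r : {r : ℝ // 0 < r} => luxNorm n Φ lam r.1 f) ⟨t, ht⟩)

theorem statement4_general (n : ℕ) (Φ : ℝ → ℝ≥0∞) (hΦ : IsYoungFunction Φ)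
    (lam : ℝ) (hlam0 : 0 ≤ lam) (hlam1 : lam ≤ 1) (t : ℝ) (ht : 0 < t) :
    centralNorm n Φ lam
        (Set.indicator (Metric.ball (0 : EuclideanSpace ℝ (Fin n)) t) fun _ => (1 : ℝ))
      = 1 / rcInv Φ (ENNReal.ofReal
            ((volume (Metric.ball (0 : EuclideanSpace ℝ (Fin n)) t)).toReal ^ (lam - 1))) := by
  have hself := luxNorm_indicator_ball_self (n := n) (lam := lam) hΦ.zero ht
  rw [centralNorm_eq_luxNorm_of_forall_le ht fun r hr =>
      (luxNorm_indicator_ball_le_luxScale hΦ.zero hlam0 hlam1 hr ht).trans_eq hself.symm,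
    hself, luxScale_eq_one_div_rcInv hΦ.mono]

/-- for a Young function Φ, 0 ≤ λ ≤ 1 and t > 0,
‖χ_{B_t}‖_{M^{Φ,λ}(0)} = 1 / Φ⁻¹(|B_t|^{λ-1}). -/
theorem statement4 (n : ℕ) (hn : 0 < n) (Φ : ℝ → ℝ≥0∞) (hΦ : IsYoungFunction Φ)
    (lam : ℝ) (hlam0 : 0 ≤ lam) (hlam1 : lam ≤ 1) (t : ℝ) (ht : 0 < t) :
    centralNorm n Φ lam
        (Set.indicator (Metric.ball (0 : EuclideanSpace ℝ (Fin n)) t) fun _ => (1 : ℝ))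
      = 1 / rcInv Φ (ENNReal.ofReal
            ((volume (Metric.ball (0 : EuclideanSpace ℝ (Fin n)) t)).toReal ^ (lam - 1))) :=
  statement4_general n Φ hΦ lam hlam0 hlam1 t ht
end
end

section
/- Let Φ be an Orlicz function with inverse Φ^{-1}, 0 < λ < 1, R ≥ 1, x_R = (R, 0, …, 0) ∈ ℝ^n, and f_R = χ_{B(x_R,1)}. Then ‖f_R‖_{M^{Φ,λ}(0)} ≤ 1 / Φ^{-1}( (v_n^λ / (2^n v_{n−1})) R^{λ n} ), where v_k denotes the volume of the unit ball in ℝ^k. -/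
open MeasureTheory ENNReal

noncomputable section

/-- An Orlicz function: `Φ : [0,∞) → [0,∞)` strictly increasing, continuous,
convex, with `Φ(0) = 0`. -/
structure IsOrliczFunction (Φ : ℝ → ℝ) : Prop where
  zero : Φ 0 = 0
  strictMono : StrictMonoOn Φ (Set.Ici 0)
  continuous : ContinuousOn Φ (Set.Ici 0)
  convex : ConvexOn ℝ (Set.Ici 0) Φ

/-- `Φinv` is the inverse of the Orlicz function `Φ` on `[0,∞)`. -/
def IsOrliczInverse (Φ Φinv : ℝ → ℝ) : Prop :=
  (∀ u : ℝ, 0 ≤ u → Φinv (Φ u) = u) ∧ (∀ v : ℝ, 0 ≤ v → 0 ≤ Φinv v ∧ Φ (Φinv v) = v)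

/-- Membership in the central Morrey–Orlicz space `M^{Φ,λ}(0)` for a real Orlicz
function `Φ`: `f ∈ L¹_loc(ℝⁿ)` and `‖f‖_{M^{Φ,λ}(0)} < ∞`. -/
def MemCentralMorreyOrlicz (n : ℕ) (Φ : ℝ → ℝ) (lam : ℝ)
    (f : EuclideanSpace ℝ (Fin n) → ℝ) : Prop :=
  LocallyIntegrable f volume ∧
    centralNorm n (fun u => ENNReal.ofReal (Φ u)) lam f < ⊤

/-- The Riesz potential `I_α f(x) = ∫_{ℝⁿ} f(y) |x-y|^{α-n} dy`. -/
def rieszPotential (n : ℕ) (α : ℝ) (f : EuclideanSpace ℝ (Fin n) → ℝ)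
    (x : EuclideanSpace ℝ (Fin n)) : ℝ :=
  ∫ y, f y * ‖x - y‖ ^ (α - (n : ℝ))

/-- The volume of the unit ball in ℝᵏ: v_k = π^{k/2} / Γ(k/2 + 1). -/
def unitBallVol (k : ℕ) : ℝ := Real.pi ^ ((k : ℝ) / 2) / Real.Gamma ((k : ℝ) / 2 + 1)

/-! For every radius `r` take `ε = 1 / Φ⁻¹(c)`, where `c` is the argument of `Φ⁻¹` in the bound.
Then `Φ(f_R / ε) = c · χ_{B(x_R,1)}`, so it suffices that `c · |B(x_R,1) ∩ B_r| ≤ |B_r|^λ`.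
The intersection lies in the cylinder `(R - 1, min r (R + 1)) × B^{n-1}_{min r 1}`, and comparing
its volume `v_{n-1} · length · radius^{n-1}` with `v_n^λ r^{λn}` splits into the regimes
`r ≤ R - 1` (empty intersection), `r < 1` (so `R < 2`), `1 ≤ r ≤ R` (length `≤ 1`, `R ≤ 2r`)
and `R < r` (length `≤ 2`). -/

open Metric Set

lemma unitBallVol_pos (k : ℕ) : 0 < unitBallVol k :=
  div_pos (Real.rpow_pos_of_pos Real.pi_pos _) (Real.Gamma_pos_of_pos (by positivity))

lemma volume_ball_eq_unitBallVol {m : ℕ} (x : EuclideanSpace ℝ (Fin m)) {r : ℝ} (hr : 0 < r) :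
    volume (ball x r) = ENNReal.ofReal (unitBallVol m * r ^ m) := by
  rcases m.eq_zero_or_pos with rfl | hm
  · have : ball x r = univ := eq_univ_of_forall fun y => by simp [Subsingleton.elim y x, hr]
    simp [this, unitBallVol, volume_pi, ← (PiLp.volume_preserving_toLp (Fin 0)).measure_preimage]
  · have : Nonempty (Fin m) := ⟨⟨0, hm⟩⟩
    rw [EuclideanSpace.volume_ball, Fintype.card_fin, ← ENNReal.ofReal_pow hr.le,
      ← ENNReal.ofReal_mul (by positivity), mul_comm, unitBallVol, Real.sqrt_eq_rpow,
      ← Real.rpow_natCast _ m, ← Real.rpow_mul Real.pi_pos.le]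
    ring_nf

lemma EuclideanSpace.norm_sq_eq_sq_add_sum_sq {m : ℕ} (x : EuclideanSpace ℝ (Fin (m + 1))) :
    ‖x‖ ^ 2 = x 0 ^ 2 + ∑ i : Fin m, x i.succ ^ 2 := by
  rw [EuclideanSpace.real_norm_sq_eq, Fin.sum_univ_succ]

lemma ball_single_inter_ball_subset {m : ℕ} (R r : ℝ) :
    ball (EuclideanSpace.single 0 R) 1 ∩ ball 0 r ⊆ {x : EuclideanSpace ℝ (Fin (m + 1)) |
      x 0 ∈ Ioo (R - 1) (min r (R + 1)) ∧ ∑ i : Fin m, x i.succ ^ 2 < min r 1 ^ 2} := by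
  rintro x ⟨hxR, hx0⟩
  rw [mem_ball, dist_eq_norm] at hxR
  rw [mem_ball_zero_iff] at hx0
  have hxR' := EuclideanSpace.norm_sq_eq_sq_add_sum_sq (x - EuclideanSpace.single 0 R)
  have hx0' := EuclideanSpace.norm_sq_eq_sq_add_sum_sq x
  simp only [PiLp.sub_apply, PiLp.single_apply, Fin.succ_ne_zero, if_true,
    if_false, sub_zero] at hxR'
  have hr : 0 < r := (norm_nonneg x).trans_lt hx0
  have hxR_sq : (x 0 - R) ^ 2 + ∑ i : Fin m, x i.succ ^ 2 < 1 ^ 2 := by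
    rw [← hxR']; exact pow_lt_pow_left₀ hxR (norm_nonneg _) two_ne_zero
  have hx0_sq : x 0 ^ 2 + ∑ i : Fin m, x i.succ ^ 2 < r ^ 2 := by
    rw [← hx0']; exact pow_lt_pow_left₀ hx0 (norm_nonneg _) two_ne_zero
  have hsum : 0 ≤ ∑ i : Fin m, x i.succ ^ 2 := Finset.sum_nonneg fun i _ => sq_nonneg _
  obtain ⟨hlo, hhi⟩ := abs_lt_of_sq_lt_sq' (by linarith : (x 0 - R) ^ 2 < 1 ^ 2) zero_le_one
  refine ⟨⟨by linarith, lt_min (abs_lt_of_sq_lt_sq' (by linarith) hr.le).2 (by linarith)⟩, ?_⟩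
  rcases le_total r 1 with h | h
  · rw [min_eq_left h]; linarith [sq_nonneg (x 0)]
  · rw [min_eq_right h]; linarith [sq_nonneg (x 0 - R)]

lemma volume_cylinder (m : ℕ) (a b : ℝ) {ρ : ℝ} (hρ : 0 < ρ) :
    volume {x : EuclideanSpace ℝ (Fin (m + 1)) |
        x 0 ∈ Ioo a b ∧ ∑ i : Fin m, x i.succ ^ 2 < ρ ^ 2}
      = ENNReal.ofReal (b - a) * ENNReal.ofReal (unitBallVol m * ρ ^ m) := by
  set D : Set (Fin m → ℝ) := {y | ∑ i, y i ^ 2 < ρ ^ 2}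
  have hD : D = WithLp.toLp 2 ⁻¹' ball 0 ρ := by
    ext y
    rw [mem_preimage, mem_ball_zero_iff, ← sq_lt_sq₀ (norm_nonneg _) hρ.le,
      EuclideanSpace.real_norm_sq_eq]
    rfl
  have hDvol : volume D = ENNReal.ofReal (unitBallVol m * ρ ^ m) := by
    rw [hD, (PiLp.volume_preserving_toLp (Fin m)).measure_preimage
      measurableSet_ball.nullMeasurableSet, volume_ball_eq_unitBallVol 0 hρ]
  have hsplit : MeasurePreserving (MeasurableEquiv.piFinSuccAbove (fun _ => ℝ) 0 ∘ WithLp.ofLp)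
      (volume : Measure (EuclideanSpace ℝ (Fin (m + 1)))) volume :=
    (volume_preserving_piFinSuccAbove (fun _ => ℝ) 0).comp (PiLp.volume_preserving_ofLp _)
  have hDmeas : MeasurableSet D := by
    rw [hD]; exact measurableSet_ball.preimage (by fun_prop)
  -- the cylinder is, by definition, the preimage of `Ioo a b ×ˢ D` under the split
  rw [← Real.volume_Ioo, ← hDvol, ← Measure.prod_prod, ← Measure.volume_eq_prod,
    ← hsplit.measure_preimage (measurableSet_Ioo.prod hDmeas).nullMeasurableSet]
  rfl

lemma cylinder_dims_mul_rpow_le {m : ℕ} {a R r : ℝ} (ha0 : 0 ≤ a) (ha : a ≤ m + 1)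
    (hR : 1 ≤ R) (hr : 0 < r) :
    (min r (R + 1) - (R - 1)) * min r 1 ^ m * R ^ a ≤ 2 ^ (m + 1) * r ^ a := by
  have h2a : (2 : ℝ) ^ a ≤ 2 ^ (m + 1) := by
    rw [← Real.rpow_natCast]
    exact Real.rpow_le_rpow_of_exponent_le one_le_two (by push_cast; exact ha)
  have h2 : (2 : ℝ) ≤ 2 ^ (m + 1) := le_self_pow₀ one_le_two (by omega)
  have hra : 0 ≤ r ^ a := by positivity
  rcases le_or_gt r (R - 1) with hrR | hrR
  · have : min r (R + 1) - (R - 1) ≤ 0 := by linarith [min_le_left r (R + 1)]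
    exact (mul_nonpos_of_nonpos_of_nonneg (mul_nonpos_of_nonpos_of_nonneg this (by positivity))
      (by positivity)).trans (by positivity)
  rcases lt_or_ge r 1 with hr1 | hr1
  · calc (min r (R + 1) - (R - 1)) * min r 1 ^ m * R ^ a
        ≤ r * r ^ m * 2 ^ a := by
          rw [min_eq_left hr1.le]
          gcongr
          · linarith [min_le_left r (R + 1)]
          · linarith
      _ = r ^ ((m + 1 : ℕ) : ℝ) * 2 ^ a := by rw [Real.rpow_natCast, pow_succ']
      _ ≤ r ^ a * 2 ^ (m + 1) := by
          refine mul_le_mul ?_ h2a (by positivity) hra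
          exact Real.rpow_le_rpow_of_exponent_ge hr hr1.le (by push_cast; exact ha)
      _ = 2 ^ (m + 1) * r ^ a := mul_comm _ _
  rcases le_or_gt r R with hrR' | hrR'
  · calc (min r (R + 1) - (R - 1)) * min r 1 ^ m * R ^ a
        ≤ 1 * 1 ^ m * (2 * r) ^ a := by
          rw [min_eq_right hr1]
          gcongr
          · linarith [min_le_left r (R + 1)]
          · linarith
      _ = 2 ^ a * r ^ a := by rw [one_pow, one_mul, one_mul, Real.mul_rpow zero_le_two hr.le]
      _ ≤ 2 ^ (m + 1) * r ^ a := by gcongr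
  · calc (min r (R + 1) - (R - 1)) * min r 1 ^ m * R ^ a
        ≤ 2 * 1 ^ m * r ^ a := by
          rw [min_eq_right hr1]
          gcongr
          linarith [min_le_right r (R + 1)]
      _ ≤ 2 ^ (m + 1) * r ^ a := by rw [one_pow, mul_one]; gcongr

lemma volume_ball_single_inter_ball_le {m : ℕ} (R : ℝ) {r : ℝ} (hr : 0 < r) :
    volume (ball (EuclideanSpace.single (0 : Fin (m + 1)) R) 1 ∩ ball 0 r)
      ≤ ENNReal.ofReal ((min r (R + 1) - (R - 1)) * (unitBallVol m * min r 1 ^ m)) := by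
  rw [ENNReal.ofReal_mul' (by have := unitBallVol_pos m; positivity),
    ← volume_cylinder m _ _ (lt_min hr one_pos)]
  exact measure_mono (ball_single_inter_ball_subset R r)

lemma ofReal_mul_volume_ball_single_inter_ball_le {m : ℕ} {lam R r : ℝ} (hlam0 : 0 ≤ lam)
    (hlam1 : lam ≤ 1) (hR : 1 ≤ R) (hr : 0 < r) :
    ENNReal.ofReal (unitBallVol (m + 1) ^ lam / (2 ^ (m + 1) * unitBallVol m)
        * R ^ (lam * ((m + 1 : ℕ) : ℝ)))
        * volume (ball (EuclideanSpace.single (0 : Fin (m + 1)) R) 1 ∩ ball 0 r)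
      ≤ ENNReal.ofReal ((volume (ball (0 : EuclideanSpace ℝ (Fin (m + 1))) r)).toReal ^ lam) := by
  have hv := unitBallVol_pos (m + 1)
  have hw := unitBallVol_pos m
  have hR0 : 0 < R := by linarith
  have hdims := cylinder_dims_mul_rpow_le (m := m) (a := lam * ((m + 1 : ℕ) : ℝ))
    (by positivity) (by push_cast; nlinarith) hR hr
  rw [volume_ball_eq_unitBallVol 0 hr, ENNReal.toReal_ofReal (by positivity)]
  refine (mul_le_mul_right (volume_ball_single_inter_ball_le R hr) _).trans ?_
  rw [← ENNReal.ofReal_mul (by positivity)]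
  refine ENNReal.ofReal_le_ofReal ?_
  calc unitBallVol (m + 1) ^ lam / (2 ^ (m + 1) * unitBallVol m) * R ^ (lam * ((m + 1 : ℕ) : ℝ))
        * ((min r (R + 1) - (R - 1)) * (unitBallVol m * min r 1 ^ m))
      = unitBallVol (m + 1) ^ lam / 2 ^ (m + 1)
        * ((min r (R + 1) - (R - 1)) * min r 1 ^ m * R ^ (lam * ((m + 1 : ℕ) : ℝ))) := by
        field_simp
    _ ≤ unitBallVol (m + 1) ^ lam / 2 ^ (m + 1) * (2 ^ (m + 1) * r ^ (lam * ((m + 1 : ℕ) : ℝ))) := by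
        gcongr
    _ = (unitBallVol (m + 1) * r ^ (m + 1)) ^ lam := by
        rw [Real.mul_rpow hv.le (by positivity), ← Real.rpow_natCast r, ← Real.rpow_mul hr.le,
          mul_comm (_ : ℝ) lam]
        field_simp

lemma IsOrliczInverse.pos {Φ Φinv : ℝ → ℝ} (h : IsOrliczInverse Φ Φinv) (h0 : Φ 0 = 0)
    {v : ℝ} (hv : 0 < v) : 0 < Φinv v := by
  obtain ⟨hnonneg, hΦ⟩ := h.2 v hv.le
  refine hnonneg.lt_of_ne fun hzero => hv.ne ?_
  rw [← hΦ, ← hzero, h0]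

lemma luxNorm_indicator_le {n : ℕ} {Φ Φinv : ℝ → ℝ} (hΦinv : IsOrliczInverse Φ Φinv)
    (h0 : Φ 0 = 0) {s : Set (EuclideanSpace ℝ (Fin n))} (hs : MeasurableSet s) {lam c r : ℝ}
    (hc : 0 < c)
    (hvol : ENNReal.ofReal c * volume (s ∩ ball 0 r)
      ≤ ENNReal.ofReal ((volume (ball (0 : EuclideanSpace ℝ (Fin n)) r)).toReal ^ lam)) :
    luxNorm n (fun u => ENNReal.ofReal (Φ u)) lam r (s.indicator fun _ => (1 : ℝ))
      ≤ ENNReal.ofReal (1 / Φinv c) := by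
  refine sInf_le ⟨1 / Φinv c, one_div_pos.mpr (hΦinv.pos h0 hc), rfl, ?_⟩
  have hpt : (fun x => ENNReal.ofReal (Φ (|s.indicator (fun _ => (1 : ℝ)) x| / (1 / Φinv c))))
      = s.indicator fun _ => ENNReal.ofReal c := by
    ext x
    by_cases hx : x ∈ s
    · simp [hx, (hΦinv.2 c hc.le).2]
    · simp [hx, h0]
  rwa [hpt, lintegral_indicator hs, setLIntegral_const, Measure.restrict_apply hs]

/-- for R ≥ 1, x_R = (R,0,…,0) and f_R = χ_{B(x_R,1)},
one has ‖f_R‖_{M^{Φ,λ}(0)} ≤ 1 / Φ⁻¹((v_n^λ/(2^n v_{n-1})) R^{λn}). -/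
theorem statement12 (n : ℕ) (hn : 0 < n)
    (Φ Φinv : ℝ → ℝ) (hΦ : IsOrliczFunction Φ) (hΦinv : IsOrliczInverse Φ Φinv)
    (lam : ℝ) (hlam0 : 0 < lam) (hlam1 : lam < 1) (R : ℝ) (hR : 1 ≤ R) :
    centralNorm n (fun u => ENNReal.ofReal (Φ u)) lam
        (Set.indicator (Metric.ball (EuclideanSpace.single (⟨0, hn⟩ : Fin n) R) 1)
          fun _ => (1 : ℝ))
      ≤ ENNReal.ofReal
          (1 / Φinv (unitBallVol n ^ lam / (2 ^ n * unitBallVol (n - 1))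
              * R ^ (lam * n))) := by
  obtain ⟨m, rfl⟩ : ∃ m, n = m + 1 := ⟨n - 1, (Nat.succ_pred_eq_of_pos hn).symm⟩
  rw [Nat.add_sub_cancel]
  have hc : 0 < unitBallVol (m + 1) ^ lam / (2 ^ (m + 1) * unitBallVol m)
      * R ^ (lam * ((m + 1 : ℕ) : ℝ)) := by
    have := unitBallVol_pos (m + 1)
    have := unitBallVol_pos m
    have : 0 < R := by linarith
    positivity
  exact iSup_le fun r => luxNorm_indicator_le hΦinv hΦ.zero measurableSet_ball hc
    (ofReal_mul_volume_ball_single_inter_ball_le hlam0.le hlam1.le hR r.2)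
end
end

section
/- Let 0 < α < n, 0 < λ < 1, and let Φ, Ψ be Orlicz functions. Then the Riesz potential I_α is not bounded from the central Morrey–Orlicz space M^{Φ,λ}(0) to the Orlicz space L^Ψ(ℝ^n): there is no constant C > 0 such that ‖I_α f‖_{L^Ψ(ℝ^n)} ≤ C ‖f‖_{M^{Φ,λ}(0)} for all f ∈ M^{Φ,λ}(0). -/
open MeasureTheory ENNReal

noncomputable section

/-- The Luxemburg norm on the Orlicz space L^Ψ(ℝⁿ). -/
def orliczNorm (n : ℕ) (Ψ : ℝ → ℝ) (f : EuclideanSpace ℝ (Fin n) → ℝ) : ℝ≥0∞ :=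
  sInf {ε : ℝ≥0∞ | ∃ e : ℝ, 0 < e ∧ ε = ENNReal.ofReal e ∧
    (∫⁻ x, ENNReal.ofReal (Ψ (|f x| / e))) ≤ 1}

/-!
Translating the bump `1_{B(c,1)}` far from the origin makes its central Morrey–Orlicz norm
arbitrarily small: the bump meets `B_r` only for `r > ‖c‖ - 1`, and there `|B_r|^λ → ∞`
dominates the fixed quantity `Φ(1/ε) |B_1|`. On the other hand `I_α 1_{B(c,1)}` is bounded
below by a constant on a unit ball at distance `3` from `c`, so `‖I_α 1_{B(c,1)}‖_{L^Ψ}`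
is bounded below independently of `c`, since `Ψ` is unbounded by convexity.
-/

open Metric Filter Set

namespace IsOrliczFunction

variable {Φ : ℝ → ℝ}

lemma mul_apply_one_le (hΦ : IsOrliczFunction Φ) {t : ℝ} (ht : 1 ≤ t) : t * Φ 1 ≤ Φ t := by
  have h := hΦ.convex.secant_mono (a := 0) self_mem_Ici (mem_Ici.2 zero_le_one)
    (mem_Ici.2 (zero_le_one.trans ht)) one_ne_zero (by linarith) ht
  simp only [hΦ.zero, sub_zero, div_one] at h
  rwa [le_div_iff₀ (by linarith), mul_comm] at h

lemma tendsto_atTop (hΦ : IsOrliczFunction Φ) : Tendsto Φ atTop atTop :=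
  tendsto_atTop_mono' atTop ((eventually_ge_atTop 1).mono fun _ => hΦ.mul_apply_one_le)
    (tendsto_id.atTop_mul_const (hΦ.zero ▸ hΦ.strictMono self_mem_Ici (mem_Ici.2 zero_le_one)
      zero_lt_one))

end IsOrliczFunction

lemma tendsto_measureReal_ball_atTop {E : Type*} [NormedAddCommGroup E] [NormedSpace ℝ E]
    [MeasurableSpace E] [BorelSpace E] [FiniteDimensional ℝ E] [Nontrivial E]
    (μ : Measure E) [μ.IsAddHaarMeasure] (x : E) :
    Tendsto (fun r => μ.real (ball x r)) atTop atTop := by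
  have hd : Module.finrank ℝ E ≠ 0 := Module.finrank_pos.ne'
  have hv : 0 < μ.real (ball (0 : E) 1) :=
    ENNReal.toReal_pos (measure_ball_pos μ 0 one_pos).ne' measure_ball_lt_top.ne
  refine ((tendsto_pow_atTop hd).atTop_mul_const hv).congr' ?_
  filter_upwards [eventually_ge_atTop 0] with r hr
  rw [← Measure.addHaar_real_closedBall_eq_addHaar_real_ball μ x,
    Measure.addHaar_real_closedBall μ x hr]

lemma setLIntegral_ofReal_comp_indicator_one {X : Type*} [MeasurableSpace X] (μ : Measure X)
    {Φ : ℝ → ℝ} (hΦ0 : Φ 0 = 0) {S : Set X} (hS : MeasurableSet S) (T : Set X) (e : ℝ) :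
    ∫⁻ x in T, ENNReal.ofReal (Φ (|S.indicator 1 x| / e)) ∂μ
      = ENNReal.ofReal (Φ (1 / e)) * μ (S ∩ T) := by
  have hcomp : (fun x => ENNReal.ofReal (Φ (|S.indicator 1 x| / e)))
      = S.indicator fun _ => ENNReal.ofReal (Φ (1 / e)) := by
    ext x
    by_cases hx : x ∈ S <;> simp [hx, hΦ0]
  rw [hcomp, lintegral_indicator hS, setLIntegral_const, Measure.restrict_apply hS]

section Euclidean

variable {n : ℕ}

local notation "E" => EuclideanSpace ℝ (Fin n)

lemma ofReal_le_orliczNorm {Ψ : ℝ → ℝ} (hΨ : IsOrliczFunction Ψ) {g : E → ℝ} {S : Set E}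
    (hS : MeasurableSet S) {δ e : ℝ} (hδ : 0 ≤ δ) (he : 0 < e) (hg : ∀ x ∈ S, δ ≤ |g x|)
    (hΨS : 1 < ENNReal.ofReal (Ψ (δ / e)) * volume S) :
    ENNReal.ofReal e ≤ orliczNorm n Ψ g := by
  refine le_sInf ?_
  rintro _ ⟨e', he', rfl, hint⟩
  refine ENNReal.ofReal_le_ofReal (not_lt.1 fun he'e => hint.not_gt ?_)
  calc 1 < ENNReal.ofReal (Ψ (δ / e)) * volume S := hΨS
    _ = ∫⁻ _ in S, ENNReal.ofReal (Ψ (δ / e)) := (setLIntegral_const _ _).symm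
    _ ≤ ∫⁻ x in S, ENNReal.ofReal (Ψ (|g x| / e')) :=
      setLIntegral_mono' hS fun x hx => ENNReal.ofReal_le_ofReal <|
        hΨ.strictMono.monotoneOn (mem_Ici.2 (by positivity)) (mem_Ici.2 (by positivity))
          (div_le_div₀ (abs_nonneg _) (hg x hx) he' he'e.le)
    _ ≤ ∫⁻ x, ENNReal.ofReal (Ψ (|g x| / e')) := setLIntegral_le_lintegral _ _

lemma rieszPotential_indicator_one (α : ℝ) (S : Set E) (hS : MeasurableSet S) (x : E) :
    rieszPotential n α (S.indicator 1) x = ∫ y in S, ‖x - y‖ ^ (α - n) := by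
  rw [rieszPotential, ← integral_indicator hS]
  congr 1 with y
  by_cases hy : y ∈ S <;> simp [hy]

lemma rpow_mul_measureReal_le_rieszPotential_indicator_one {α : ℝ} (hαn : α ≤ n) {S : Set E}
    (hS : MeasurableSet S) (hSfin : volume S ≠ ⊤) {x : E} {ρ D : ℝ} (hρ : 0 < ρ)
    (hdist : ∀ y ∈ S, ρ ≤ dist x y ∧ dist x y ≤ D) :
    D ^ (α - n) * volume.real S ≤ rieszPotential n α (S.indicator 1) x := by
  have hexp : α - n ≤ 0 := by linarith
  have hkernel : IntegrableOn (fun y => ‖x - y‖ ^ (α - n)) S := by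
    refine Measure.integrableOn_of_bounded (M := ρ ^ (α - n)) hSfin
      (by fun_prop : Measurable fun y : E => ‖x - y‖ ^ (α - n)).aestronglyMeasurable ?_
    filter_upwards [ae_restrict_mem hS] with y hy
    rw [Real.norm_of_nonneg (by positivity), ← dist_eq_norm]
    exact Real.rpow_le_rpow_of_nonpos hρ (hdist y hy).1 hexp
  rw [rieszPotential_indicator_one α S hS, mul_comm, ← smul_eq_mul, ← setIntegral_const]
  refine setIntegral_mono_on (integrableOn_const hSfin) hkernel hS fun y hy => ?_
  rw [← dist_eq_norm]
  exact Real.rpow_le_rpow_of_nonpos (hρ.trans_le (hdist y hy).1) (hdist y hy).2 hexp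

lemma centralNorm_le_ofReal {Φ : ℝ → ℝ≥0∞} {lam e : ℝ} {f : E → ℝ} (he : 0 < e)
    (h : ∀ r > 0, ∫⁻ x in ball (0 : E) r, Φ (|f x| / e)
      ≤ ENNReal.ofReal ((volume (ball (0 : E) r)).toReal ^ lam)) :
    centralNorm n Φ lam f ≤ ENNReal.ofReal e :=
  iSup_le fun r => sInf_le ⟨e, he, rfl, h r.1 r.2⟩

lemma exists_centralNorm_indicator_ball_le [NeZero n] {Φ : ℝ → ℝ} (hΦ0 : Φ 0 = 0) {lam : ℝ}
    (hlam : 0 < lam) {e : ℝ} (he : 0 < e) :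
    ∃ R, ∀ c : E, R ≤ ‖c‖ →
      centralNorm n (fun t => ENNReal.ofReal (Φ t)) lam ((ball c 1).indicator 1)
        ≤ ENNReal.ofReal e := by
  set v := volume.real (ball (0 : E) 1)
  obtain ⟨R, hR⟩ := eventually_atTop.1 <|
    ((tendsto_rpow_atTop hlam).comp (tendsto_measureReal_ball_atTop volume (0 : E)))
      |>.eventually_ge_atTop (Φ (1 / e) * v)
  refine ⟨R + 1, fun c hc => centralNorm_le_ofReal he fun r _ => ?_⟩
  rw [setLIntegral_ofReal_comp_indicator_one volume hΦ0 measurableSet_ball]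
  rcases (ball c 1 ∩ ball (0 : E) r).eq_empty_or_nonempty with hempty | ⟨x, hxc, hx0⟩
  · simp [hempty]
  have hRr : R ≤ r := by
    have hcx := norm_le_norm_add_norm_sub' c x
    rw [mem_ball_zero_iff] at hx0
    rw [mem_ball, dist_eq_norm, norm_sub_rev] at hxc
    linarith
  calc ENNReal.ofReal (Φ (1 / e)) * volume (ball c 1 ∩ ball 0 r)
      ≤ ENNReal.ofReal (Φ (1 / e)) * ENNReal.ofReal v := by
        rw [ofReal_measureReal, ← Measure.addHaar_ball_center]
        gcongr
        exact inter_subset_left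
    _ = ENNReal.ofReal (Φ (1 / e) * v) := (ENNReal.ofReal_mul' measureReal_nonneg).symm
    _ ≤ ENNReal.ofReal ((volume (ball (0 : E) r)).toReal ^ lam) :=
        ENNReal.ofReal_le_ofReal (hR r hRr)

/-- `e₀` comes from `I_α 1_{B(c,1)} ≥ 5^{α-n} |B_1|` on a unit ball at distance `3` from `c`. -/
lemma exists_ofReal_le_orliczNorm_rieszPotential_indicator_ball [NeZero n] {α : ℝ}
    (hαn : α ≤ n) {Ψ : ℝ → ℝ} (hΨ : IsOrliczFunction Ψ) :
    ∃ e₀ > 0, ∀ c : E,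
      ENNReal.ofReal e₀ ≤ orliczNorm n Ψ (rieszPotential n α ((ball c 1).indicator 1)) := by
  set v := volume.real (ball (0 : E) 1)
  have hv : 0 < v :=
    ENNReal.toReal_pos (measure_ball_pos volume 0 one_pos).ne' measure_ball_lt_top.ne
  set δ := (5 : ℝ) ^ (α - n) * v
  have hδ : 0 < δ := by positivity
  obtain ⟨M, hM0, hMv⟩ := ((eventually_gt_atTop 0).and
    ((hΨ.tendsto_atTop.atTop_mul_const hv).eventually_gt_atTop 1)).exists
  obtain ⟨w, hw⟩ := exists_norm_eq E zero_le_three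
  refine ⟨δ / M, by positivity, fun c => ofReal_le_orliczNorm hΨ (S := ball (c + w) 1)
    measurableSet_ball hδ.le (by positivity) (fun x hx => (le_abs_self _).trans' ?_) ?_⟩
  · have hdist : dist (c + w) c = 3 := by simp [hw]
    rw [show δ = 5 ^ (α - n) * volume.real (ball c 1) by rw [Measure.addHaar_real_ball_center]]
    refine rpow_mul_measureReal_le_rieszPotential_indicator_one hαn measurableSet_ball
      measure_ball_lt_top.ne one_pos fun y hy => ?_
    rw [mem_ball] at hx hy
    constructor
    · linarith [dist_triangle4 (c + w) x y c, dist_comm x (c + w)]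
    · linarith [dist_triangle4 x (c + w) c y, dist_comm y c]
  · rw [div_div_cancel₀ hδ.ne', Measure.addHaar_ball_center, ← ofReal_measureReal,
      ← ENNReal.ofReal_mul' hv.le]
    exact ENNReal.one_lt_ofReal.2 hMv

end Euclidean

theorem statement14_general (n : ℕ) (hn : 0 < n) (α : ℝ) (hαn : α < n)
    (lam : ℝ) (hlam0 : 0 < lam)
    (Φ Ψ : ℝ → ℝ) (hΦ : IsOrliczFunction Φ) (hΨ : IsOrliczFunction Ψ) :
    ¬ ∃ C : ℝ, 0 < C ∧ ∀ f : EuclideanSpace ℝ (Fin n) → ℝ,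
        MemCentralMorreyOrlicz n Φ lam f →
          orliczNorm n Ψ (rieszPotential n α f)
            ≤ ENNReal.ofReal C * centralNorm n (fun u => ENNReal.ofReal (Φ u)) lam f := by
  rintro ⟨C, hC, hbound⟩
  have : NeZero n := ⟨hn.ne'⟩
  obtain ⟨e₀, he₀, horlicz⟩ :=
    exists_ofReal_le_orliczNorm_rieszPotential_indicator_ball hαn.le hΨ
  obtain ⟨R, hR⟩ := exists_centralNorm_indicator_ball_le (n := n) hΦ.zero hlam0
    (e := e₀ / (2 * C)) (by positivity)
  obtain ⟨c, hc⟩ := exists_norm_eq (EuclideanSpace ℝ (Fin n)) (le_max_right R 0)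
  have hcentral := hR c (hc ▸ le_max_left R 0)
  have hmem : MemCentralMorreyOrlicz n Φ lam ((ball c 1).indicator 1) :=
    ⟨(integrableOn_const measure_ball_lt_top.ne).integrable_indicator measurableSet_ball
      |>.locallyIntegrable, hcentral.trans_lt ENNReal.ofReal_lt_top⟩
  have hcontra : ENNReal.ofReal e₀ ≤ ENNReal.ofReal (e₀ / 2) :=
    calc ENNReal.ofReal e₀ ≤ _ := horlicz c
      _ ≤ _ := hbound _ hmem
      _ ≤ ENNReal.ofReal C * ENNReal.ofReal (e₀ / (2 * C)) := by gcongr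
      _ = ENNReal.ofReal (e₀ / 2) := by
        rw [← ENNReal.ofReal_mul hC.le]
        congr 1
        field_simp
  linarith [(ENNReal.ofReal_le_ofReal_iff (by positivity)).1 hcontra]

/-- for 0 < α < n and 0 < λ < 1, the Riesz potential is never
bounded from M^{Φ,λ}(0) into the Orlicz space L^Ψ(ℝⁿ). -/
theorem statement14 (n : ℕ) (hn : 0 < n) (α : ℝ) (hα0 : 0 < α) (hαn : α < n)
    (lam : ℝ) (hlam0 : 0 < lam) (hlam1 : lam < 1)
    (Φ Ψ : ℝ → ℝ) (hΦ : IsOrliczFunction Φ) (hΨ : IsOrliczFunction Ψ) :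
    ¬ ∃ C : ℝ, 0 < C ∧ ∀ f : EuclideanSpace ℝ (Fin n) → ℝ,
        MemCentralMorreyOrlicz n Φ lam f →
          orliczNorm n Ψ (rieszPotential n α f)
            ≤ ENNReal.ofReal C * centralNorm n (fun u => ENNReal.ofReal (Φ u)) lam f :=
  statement14_general n hn α hαn lam hlam0 Φ Ψ hΦ hΨ
end
end

section
/- Let Φ be an Orlicz function and λ ∈ ℝ. The central Morrey–Orlicz space M^{Φ,λ}(0) contains a function that is not almost everywhere zero if and only if λ ≥ 0. -/
open MeasureTheory ENNReal

noncomputable section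

/-!
If `λ < 0`, the normalising factor `|B_r|^λ` tends to `0` as `r → ∞`. A function that is
not a.e. zero satisfies `|f| ≥ c` on a bounded set `A` of positive measure, so an admissible
`ε` at a radius `r` with `A ⊆ B_r` has `Φ(c/ε)|A| ≤ |B_r|^λ`, which forces `ε → ∞` as
`r → ∞`.

If `λ ≥ 0`, the indicator of a ball `A` disjoint from `B_1` lies in the space: the balls `B_r`
with `r ≤ 1` do not see it, and for `r > 1` the integral `Φ(1/ε)|A ∩ B_r|` is at most
`Φ(1/ε)|A| ≤ |B_1|^λ ≤ |B_r|^λ` once `ε` is large.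
-/

open Filter Topology Metric

section MeasureBall

variable {E : Type*} [NormedAddCommGroup E] [NormedSpace ℝ E] [MeasurableSpace E] [BorelSpace E]
  [FiniteDimensional ℝ E] [Nontrivial E] (μ : Measure E) [μ.IsAddHaarMeasure]

theorem tendsto_toReal_measure_ball_atTop :
    Tendsto (fun r => (μ (ball (0 : E) r)).toReal) atTop atTop := by
  have hv : 0 < (μ (ball (0 : E) 1)).toReal :=
    toReal_pos (measure_ball_pos μ 0 one_pos).ne' measure_ball_lt_top.ne
  have hd : Module.finrank ℝ E ≠ 0 := Module.finrank_pos.ne'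
  refine ((tendsto_pow_atTop hd).atTop_mul_const hv).congr' ?_
  filter_upwards [eventually_ge_atTop 0] with r hr
  rw [Measure.addHaar_ball μ 0 hr, toReal_mul, toReal_ofReal (by positivity)]

theorem tendsto_ofReal_toReal_measure_ball_rpow_atTop {lam : ℝ} (hlam : lam < 0) :
    Tendsto (fun r => ENNReal.ofReal ((μ (ball (0 : E) r)).toReal ^ lam)) atTop (𝓝 0) := by
  have := (tendsto_rpow_neg_atTop (neg_pos.2 hlam)).comp (tendsto_toReal_measure_ball_atTop μ)
  simpa only [Function.comp_def, neg_neg, ofReal_zero] using ENNReal.tendsto_ofReal this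

end MeasureBall

theorem exists_measure_abs_ge_inter_ball_ne_zero {X : Type*} [PseudoMetricSpace X]
    [MeasurableSpace X] {μ : Measure X} {g : X → ℝ} (hg : ¬ g =ᵐ[μ] 0) (x₀ : X) :
    ∃ c > 0, ∃ R, μ ({x | c ≤ |g x|} ∩ ball x₀ R) ≠ 0 := by
  by_contra! h
  refine hg (ae_iff.2 (measure_mono_null (fun x (hx : g x ≠ 0) => ?_)
    (measure_iUnion_null fun k : ℕ => h ((k : ℝ) + 1)⁻¹ (by positivity) (k + 1))))
  obtain ⟨k, hk⟩ := exists_nat_gt (max (|g x|⁻¹) (dist x x₀))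
  refine Set.mem_iUnion.2 ⟨k, ?_, ?_⟩
  · exact inv_le_of_inv_le₀ (abs_pos.2 hx)
      ((le_max_left _ _).trans (hk.trans (lt_add_one _)).le)
  · exact ((le_max_right _ _).trans_lt hk).trans (lt_add_one _)

theorem setLIntegral_ofReal_comp_abs_indicator_one_div {X : Type*} [MeasurableSpace X]
    (μ : Measure X) {Φ : ℝ → ℝ} (hΦ0 : Φ 0 = 0) {A : Set X} (hA : MeasurableSet A) (s : Set X)
    (e : ℝ) :
    ∫⁻ x in s, ENNReal.ofReal (Φ (|A.indicator 1 x| / e)) ∂μ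
      = ENNReal.ofReal (Φ e⁻¹) * μ (A ∩ s) := by
  have : (fun x => ENNReal.ofReal (Φ (|A.indicator (1 : X → ℝ) x| / e)))
      = A.indicator fun _ => ENNReal.ofReal (Φ e⁻¹) := by
    funext x
    by_cases hx : x ∈ A <;> simp [hx, hΦ0]
  rw [this, lintegral_indicator hA, setLIntegral_const, Measure.restrict_apply hA]

section CentralMorreyOrlicz

variable {n : ℕ} {Φ : ℝ → ℝ} {lam : ℝ}

theorem ofReal_le_luxNorm {f : EuclideanSpace ℝ (Fin n) → ℝ} (hΦ : MonotoneOn Φ (Set.Ici 0))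
    {r c M : ℝ} (hc : 0 ≤ c) (hM : 0 < M) {A : Set (EuclideanSpace ℝ (Fin n))}
    (hA : NullMeasurableSet A) (hAr : A ⊆ ball 0 r) (hfA : ∀ x ∈ A, c ≤ |f x|)
    (hlt : ENNReal.ofReal ((volume (ball (0 : EuclideanSpace ℝ (Fin n)) r)).toReal ^ lam)
      < ENNReal.ofReal (Φ (c / M)) * volume A) :
    ENNReal.ofReal M ≤ luxNorm n (fun u => ENNReal.ofReal (Φ u)) lam r f := by
  refine le_sInf ?_
  rintro _ ⟨e, he, rfl, hint⟩
  rw [ofReal_le_ofReal_iff he.le]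
  by_contra! heM
  have hle : ENNReal.ofReal (Φ (c / M)) * volume A
      ≤ ∫⁻ x in ball 0 r, ENNReal.ofReal (Φ (|f x| / e)) :=
    calc ENNReal.ofReal (Φ (c / M)) * volume A
        = ∫⁻ _ in A, ENNReal.ofReal (Φ (c / M)) := (setLIntegral_const A _).symm
      _ ≤ ∫⁻ x in A, ENNReal.ofReal (Φ (|f x| / e)) := by
          refine lintegral_mono_ae ((ae_restrict_mem₀ hA).mono fun x hx => ?_)
          refine ofReal_le_ofReal (hΦ (div_nonneg hc hM.le)
            (div_nonneg (abs_nonneg _) he.le) ?_)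
          exact (div_le_div_of_nonneg_left hc he heM.le).trans
            (div_le_div_of_nonneg_right (hfA x hx) he.le)
      _ ≤ ∫⁻ x in ball 0 r, ENNReal.ofReal (Φ (|f x| / e)) := lintegral_mono_set hAr
  exact hlt.not_ge (hle.trans hint)

theorem centralNorm_eq_top_of_neg (hn : 0 < n) (hΦ0 : Φ 0 = 0)
    (hΦ : StrictMonoOn Φ (Set.Ici 0)) (hlam : lam < 0) {f : EuclideanSpace ℝ (Fin n) → ℝ}
    (hf : AEMeasurable f) (hf0 : ¬ f =ᵐ[volume] 0) :
    centralNorm n (fun u => ENNReal.ofReal (Φ u)) lam f = ⊤ := by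
  have : Nonempty (Fin n) := ⟨⟨0, hn⟩⟩
  obtain ⟨c, hc, R, hA⟩ := exists_measure_abs_ge_inter_ball_ne_zero hf0 0
  have hAm : NullMeasurableSet ({x | c ≤ |f x|} ∩ ball 0 R) :=
    (nullMeasurableSet_le aemeasurable_const hf.abs).inter measurableSet_ball.nullMeasurableSet
  refine eq_top_of_forall_nnreal_le fun M => ?_
  have hM : (0 : ℝ) < M + 1 := by positivity
  have hη : 0 < ENNReal.ofReal (Φ (c / (M + 1))) * volume ({x | c ≤ |f x|} ∩ ball 0 R) := by
    have hΦc : 0 < Φ (c / (M + 1)) :=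
      hΦ0 ▸ hΦ Set.self_mem_Ici (div_pos hc hM).le (div_pos hc hM)
    exact ENNReal.mul_pos (ofReal_pos.2 hΦc).ne' hA
  have hsmall := (tendsto_ofReal_toReal_measure_ball_rpow_atTop
    (volume : Measure (EuclideanSpace ℝ (Fin n))) hlam).eventually_lt_const hη
  obtain ⟨r, hRr, hr0, hr⟩ :=
    ((eventually_ge_atTop R).and ((eventually_gt_atTop 0).and hsmall)).exists
  calc (M : ℝ≥0∞) ≤ ENNReal.ofReal (M + 1) := by
        rw [← ofReal_coe_nnreal]; exact ofReal_le_ofReal (by linarith)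
    _ ≤ luxNorm n (fun u => ENNReal.ofReal (Φ u)) lam r f :=
        ofReal_le_luxNorm hΦ.monotoneOn hc.le hM hAm
          (Set.inter_subset_right.trans (ball_subset_ball hRr)) (fun x hx => hx.1) hr
    _ ≤ centralNorm n (fun u => ENNReal.ofReal (Φ u)) lam f :=
        le_iSup (fun r : {r : ℝ // 0 < r} => luxNorm n _ lam r.1 f) ⟨r, hr0⟩

theorem centralNorm_indicator_one_lt_top (hΦ0 : Φ 0 = 0)
    (hΦc : ContinuousWithinAt Φ (Set.Ici 0) 0) (hlam : 0 ≤ lam)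
    {A : Set (EuclideanSpace ℝ (Fin n))} (hA : MeasurableSet A) (hAfin : volume A ≠ ⊤)
    {ρ : ℝ} (hρ : 0 < ρ) (hAρ : Disjoint A (ball 0 ρ)) :
    centralNorm n (fun u => ENNReal.ofReal (Φ u)) lam (A.indicator 1) < ⊤ := by
  have hρpos : 0 < ENNReal.ofReal
      ((volume (ball (0 : EuclideanSpace ℝ (Fin n)) ρ)).toReal ^ lam) :=
    ofReal_pos.2 (Real.rpow_pos_of_pos
      (toReal_pos (measure_ball_pos _ _ hρ).ne' measure_ball_lt_top.ne) _)
  have hlim : Tendsto (fun e : ℝ => ENNReal.ofReal (Φ e⁻¹) * volume A) atTop (𝓝 0) := by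
    have hΦ : Tendsto (fun e : ℝ => Φ e⁻¹) atTop (𝓝 0) := hΦ0 ▸ hΦc.tendsto.comp
      (tendsto_nhdsWithin_mono_right Set.Ioi_subset_Ici_self tendsto_inv_atTop_nhdsGT_zero)
    simpa using ENNReal.Tendsto.mul_const (ENNReal.tendsto_ofReal hΦ) (Or.inr hAfin)
  obtain ⟨e, he, hle⟩ := ((eventually_gt_atTop 0).and (hlim.eventually_lt_const hρpos)).exists
  refine lt_of_le_of_lt (iSup_le fun r => sInf_le ⟨e, he, rfl, ?_⟩) ofReal_lt_top
  rw [setLIntegral_ofReal_comp_abs_indicator_one_div _ hΦ0 hA]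
  rcases le_or_gt r.1 ρ with hr | hr
  · rw [(hAρ.mono_right (ball_subset_ball hr)).inter_eq, measure_empty, mul_zero]
    exact zero_le
  · calc ENNReal.ofReal (Φ e⁻¹) * volume (A ∩ ball 0 r.1)
        ≤ ENNReal.ofReal (Φ e⁻¹) * volume A := by gcongr; exact Set.inter_subset_left
      _ ≤ ENNReal.ofReal ((volume (ball (0 : EuclideanSpace ℝ (Fin n)) ρ)).toReal ^ lam) :=
          hle.le
      _ ≤ ENNReal.ofReal ((volume (ball (0 : EuclideanSpace ℝ (Fin n)) r.1)).toReal ^ lam) :=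
          ofReal_le_ofReal (Real.rpow_le_rpow toReal_nonneg (toReal_mono
            measure_ball_lt_top.ne (measure_mono (ball_subset_ball hr.le))) hlam)

end CentralMorreyOrlicz

/-- the central Morrey–Orlicz space M^{Φ,λ}(0) contains a function
which is not a.e. zero if and only if λ ≥ 0. -/
theorem statement15 (n : ℕ) (hn : 0 < n) (Φ : ℝ → ℝ) (hΦ : IsOrliczFunction Φ)
    (lam : ℝ) :
    (∃ f : EuclideanSpace ℝ (Fin n) → ℝ,
        MemCentralMorreyOrlicz n Φ lam f ∧ ¬ (f =ᵐ[volume] fun _ => (0 : ℝ)))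
      ↔ 0 ≤ lam := by
  constructor
  · rintro ⟨f, ⟨hloc, hnorm⟩, hf0⟩
    by_contra! hlam
    exact hnorm.ne (centralNorm_eq_top_of_neg hn hΦ.zero hΦ.strictMono hlam
      hloc.aestronglyMeasurable.aemeasurable hf0)
  · intro hlam
    have : Nonempty (Fin n) := ⟨⟨0, hn⟩⟩
    obtain ⟨x₀, hx₀⟩ := exists_norm_eq (EuclideanSpace ℝ (Fin n)) zero_le_two
    have hdisj : Disjoint (ball x₀ 1) (ball 0 1) :=
      ball_disjoint_ball (by rw [dist_zero_right, hx₀]; norm_num)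
    refine ⟨(ball x₀ 1).indicator 1, ⟨?_, centralNorm_indicator_one_lt_top hΦ.zero
      (hΦ.continuous 0 Set.self_mem_Ici) hlam measurableSet_ball measure_ball_lt_top.ne
      one_pos hdisj⟩, fun h => ?_⟩
    · exact ((integrableOn_const measure_ball_lt_top.ne).integrable_indicator
        measurableSet_ball).locallyIntegrable
    · have h := Set.indicator_ae_eq_zero.1 h
      rw [Function.support_one, Set.inter_univ] at h
      exact (measure_ball_pos volume x₀ one_pos).ne' h
end
end

section
/- Let Φ and Ψ be Orlicz functions and 0 ≤ λ, μ < 1. Assume there exist constants A_1, A_2 > 0 such that (i) Φ(u/A_1) ≤ Ψ(u)^{(λ−1)/(μ−1)} for all u > 0, and (ii) Φ(u/A_2) ≤ Ψ(u) r^{λ−μ} for all u, r > 0 satisfying Ψ^{-1}(r^{μ−1}) < u. Then M^{Ψ,μ}(0) embeds into M^{Φ,λ}(0); more precisely, ‖f‖_{M^{Φ,λ}(0)} ≤ 2 max(A_1, A_2) ‖f‖_{M^{Ψ,μ}(0)} for every f ∈ M^{Ψ,μ}(0). -/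
open MeasureTheory ENNReal

noncomputable section

/-!
Fix a ball `B` with `|B| = v` and a scale `e` admissible for `‖f‖_{Ψ,μ,B}`, and put `u = |f|/e`,
`M = max A₁ A₂`, `θ = (λ - 1)/(μ - 1) > 0`. Where `Ψ(u) ≤ v^(μ-1)` condition (i) gives
`Φ(u/M) ≤ Ψ(u)^θ`; elsewhere `u > Ψ⁻¹(v^(μ-1))` and condition (ii) with `r = v` gives
`Φ(u/M) ≤ Ψ(u) v^(λ-μ)`. The second term integrates to at most `v^μ v^(λ-μ) = v^λ`. So does the
first: for `θ < 1` by Hölder, `∫ Ψ(u)^θ ≤ (∫ Ψ(u))^θ v^(1-θ) ≤ v^(μθ+1-θ) = v^λ`, and for `θ ≥ 1`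
because `Ψ(u)^θ ≤ Ψ(u) (v^(μ-1))^(θ-1) = Ψ(u) v^(λ-μ)` on the set where it appears. Convexity gives
`Φ(u/(2M)) ≤ Φ(u/M)/2`, so `2Me` is admissible for `‖f‖_{Φ,λ,B}`.
-/

open Set

theorem ContinuousOn.comp_aemeasurable_of_nonneg {α : Type*} [MeasurableSpace α] {ν : Measure α}
    {Φ : ℝ → ℝ} (hΦ : ContinuousOn Φ (Ici 0)) {g : α → ℝ} (hg : AEMeasurable g ν)
    (hg0 : ∀ x, 0 ≤ g x) : AEMeasurable (fun x => Φ (g x)) ν := by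
  have hcont : Continuous fun t => Φ (max t 0) :=
    hΦ.comp_continuous (continuous_id.max continuous_const) fun t => le_max_right t 0
  convert hcont.measurable.comp_aemeasurable hg using 2 with x
  simp [hg0 x]

namespace IsOrliczFunction

variable {Φ : ℝ → ℝ}

theorem nonneg (hΦ : IsOrliczFunction Φ) {u : ℝ} (hu : 0 ≤ u) : 0 ≤ Φ u :=
  hΦ.zero ▸ hΦ.strictMono.monotoneOn self_mem_Ici hu hu

theorem apply_div_le_apply_div (hΦ : IsOrliczFunction Φ) {u a b : ℝ} (hu : 0 ≤ u) (ha : 0 < a)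
    (hab : a ≤ b) : Φ (u / b) ≤ Φ (u / a) :=
  hΦ.strictMono.monotoneOn (div_nonneg hu (ha.trans_le hab).le) (div_nonneg hu ha.le)
    (div_le_div_of_nonneg_left hu ha hab)

theorem apply_div_two_le (hΦ : IsOrliczFunction Φ) {u : ℝ} (hu : 0 ≤ u) :
    Φ (u / 2) ≤ Φ u / 2 := by
  have h := hΦ.convex.2 (mem_Ici.mpr hu) self_mem_Ici (by norm_num : (0 : ℝ) ≤ 2⁻¹)
    (by norm_num : (0 : ℝ) ≤ 2⁻¹) (by norm_num)
  simpa [hΦ.zero, div_eq_inv_mul] using h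

end IsOrliczFunction

theorem IsOrliczInverse.lt_of_lt_apply {Ψ Ψinv : ℝ → ℝ} (h : IsOrliczInverse Ψ Ψinv)
    (hΨ : IsOrliczFunction Ψ) {a u : ℝ} (ha : 0 ≤ a) (hu : 0 ≤ u) (hlt : a < Ψ u) :
    Ψinv a < u := by
  obtain ⟨hinv0, hinv⟩ := h.2 a ha
  exact (hΨ.strictMono.lt_iff_lt hinv0 hu).mp (hinv.symm ▸ hlt)

theorem IsOrliczFunction.apply_div_le_ite_add {Φ Ψ Ψinv : ℝ → ℝ} (hΦ : IsOrliczFunction Φ)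
    (hΨ : IsOrliczFunction Ψ) (hΨinv : IsOrliczInverse Ψ Ψinv) {A θ a b : ℝ}
    (hi : ∀ u, 0 < u → Φ (u / A) ≤ Ψ u ^ θ)
    (hii : ∀ u, 0 < u → Ψinv a < u → Φ (u / A) ≤ Ψ u * b) (ha : 0 ≤ a) (hb : 0 ≤ b)
    {u : ℝ} (hu : 0 ≤ u) :
    Φ (u / A) ≤ (if Ψ u ≤ a then Ψ u ^ θ else 0) + Ψ u * b := by
  have hΨu := hΨ.nonneg hu
  rcases hu.eq_or_lt with rfl | hu
  · rw [zero_div, hΦ.zero]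
    split_ifs <;> positivity
  split_ifs with h
  · exact (hi u hu).trans (le_add_of_nonneg_right (by positivity))
  · rw [zero_add]
    exact hii u hu (hΨinv.lt_of_lt_apply hΨ ha hu.le (not_le.mp h))

theorem lintegral_ite_rpow_le {α : Type*} [MeasurableSpace α] {ν : Measure α} {g : α → ℝ}
    {v lam μ : ℝ} (hg : AEMeasurable g ν) (hg0 : ∀ x, 0 ≤ g x) (hv : 0 < v)
    (hν : ν univ = ENNReal.ofReal v) (hlam : lam < 1) (hμ : μ < 1)
    (hint : ∫⁻ x, ENNReal.ofReal (g x) ∂ν ≤ ENNReal.ofReal (v ^ μ)) :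
    ∫⁻ x, ENNReal.ofReal (if g x ≤ v ^ (μ - 1) then g x ^ ((lam - 1) / (μ - 1)) else 0) ∂ν
      ≤ ENNReal.ofReal (v ^ lam) := by
  set θ := (lam - 1) / (μ - 1) with hθ
  have hθ0 : 0 < θ := div_pos_of_neg_of_neg (by linarith) (by linarith)
  have hμ1 : μ - 1 ≠ 0 := by linarith
  rcases lt_or_ge θ 1 with hθ1 | hθ1
  · calc _ ≤ ∫⁻ x, ENNReal.ofReal (g x) ^ θ * 1 ^ (1 - θ) ∂ν := by
          refine lintegral_mono fun x => ?_
          rw [ENNReal.one_rpow, mul_one, ENNReal.ofReal_rpow_of_nonneg (hg0 x) hθ0.le]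
          refine ENNReal.ofReal_le_ofReal ?_
          split_ifs
          exacts [le_rfl, Real.rpow_nonneg (hg0 x) θ]
      _ ≤ (∫⁻ x, ENNReal.ofReal (g x) ∂ν) ^ θ * (∫⁻ _, 1 ∂ν) ^ (1 - θ) :=
          ENNReal.lintegral_mul_norm_pow_le hg.ennreal_ofReal aemeasurable_const hθ0.le
            (by linarith) (by ring)
      _ ≤ ENNReal.ofReal (v ^ μ) ^ θ * ENNReal.ofReal v ^ (1 - θ) := by
          rw [lintegral_one, hν]
          gcongr
      _ = ENNReal.ofReal (v ^ lam) := by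
          rw [ENNReal.ofReal_rpow_of_nonneg (by positivity) hθ0.le,
            ENNReal.ofReal_rpow_of_nonneg hv.le (by linarith), ← ENNReal.ofReal_mul (by positivity),
            ← Real.rpow_mul hv.le, ← Real.rpow_add hv, hθ]
          congr 2
          field_simp
          ring
  · calc _ ≤ ∫⁻ x, ENNReal.ofReal (g x) * ENNReal.ofReal (v ^ (lam - μ)) ∂ν := by
          refine lintegral_mono fun x => ?_
          rw [← ENNReal.ofReal_mul (hg0 x)]
          refine ENNReal.ofReal_le_ofReal ?_
          split_ifs with h
          · calc g x ^ θ = g x * g x ^ (θ - 1) := by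
                  rw [← Real.rpow_one_add' (hg0 x) (by linarith), add_sub_cancel]
              _ ≤ g x * (v ^ (μ - 1)) ^ (θ - 1) := by gcongr; exacts [hg0 x, hg0 x]
              _ = g x * v ^ (lam - μ) := by
                  rw [← Real.rpow_mul hv.le, hθ]
                  congr 2
                  field_simp
                  ring
          · exact mul_nonneg (hg0 x) (by positivity)
      _ = (∫⁻ x, ENNReal.ofReal (g x) ∂ν) * ENNReal.ofReal (v ^ (lam - μ)) :=
          lintegral_mul_const' _ _ ENNReal.ofReal_ne_top
      _ ≤ ENNReal.ofReal (v ^ μ) * ENNReal.ofReal (v ^ (lam - μ)) := by gcongr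
      _ = ENNReal.ofReal (v ^ lam) := by
          rw [← ENNReal.ofReal_mul (by positivity), ← Real.rpow_add hv, add_sub_cancel]

theorem lintegral_orlicz_div_le_of_lintegral_le {α : Type*} [MeasurableSpace α] {ν : Measure α}
    {Φ Ψ Ψinv : ℝ → ℝ} (hΦ : IsOrliczFunction Φ) (hΨ : IsOrliczFunction Ψ)
    (hΨinv : IsOrliczInverse Ψ Ψinv) {lam μ A v : ℝ} (hlam : lam < 1) (hμ : μ < 1) (hA : 0 ≤ A)
    (hi : ∀ u, 0 < u → Φ (u / A) ≤ Ψ u ^ ((lam - 1) / (μ - 1)))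
    (hii : ∀ u, 0 < u → Ψinv (v ^ (μ - 1)) < u → Φ (u / A) ≤ Ψ u * v ^ (lam - μ))
    {g : α → ℝ} (hg : AEMeasurable g ν) (hg0 : ∀ x, 0 ≤ g x) (hv : 0 < v)
    (hν : ν univ = ENNReal.ofReal v)
    (hint : ∫⁻ x, ENNReal.ofReal (Ψ (g x)) ∂ν ≤ ENNReal.ofReal (v ^ μ)) :
    ∫⁻ x, ENNReal.ofReal (Φ (g x / (2 * A))) ∂ν ≤ ENNReal.ofReal (v ^ lam) := by
  set c := ENNReal.ofReal (v ^ (lam - μ))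
  set small : α → ℝ := fun x =>
    if Ψ (g x) ≤ v ^ (μ - 1) then Ψ (g x) ^ ((lam - 1) / (μ - 1)) else 0
  have hpt : ∀ x, ENNReal.ofReal (Φ (g x / (2 * A)))
      ≤ 2⁻¹ * (ENNReal.ofReal (small x) + ENNReal.ofReal (Ψ (g x)) * c) := by
    intro x
    have hsmall : 0 ≤ small x := by
      simp only [small]
      split_ifs
      exacts [Real.rpow_nonneg (hΨ.nonneg (hg0 x)) _, le_rfl]
    have hΨg := hΨ.nonneg (hg0 x)
    rw [mul_comm 2 A, ← div_div, ← ENNReal.ofReal_mul hΨg,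
      ← ENNReal.ofReal_add hsmall (by positivity), ← ENNReal.ofReal_ofNat 2,
      ← ENNReal.ofReal_inv_of_pos two_pos, ← ENNReal.ofReal_mul (by norm_num)]
    refine ENNReal.ofReal_le_ofReal ((hΦ.apply_div_two_le (div_nonneg (hg0 x) hA)).trans ?_)
    rw [div_eq_inv_mul]
    gcongr
    exact hΦ.apply_div_le_ite_add hΨ hΨinv hi hii (by positivity) (by positivity) (hg0 x)
  have hG : AEMeasurable (fun x => ENNReal.ofReal (Ψ (g x))) ν :=
    (hΨ.continuous.comp_aemeasurable_of_nonneg hg hg0).ennreal_ofReal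
  calc _ ≤ ∫⁻ x, 2⁻¹ * (ENNReal.ofReal (small x) + ENNReal.ofReal (Ψ (g x)) * c) ∂ν :=
        lintegral_mono hpt
    _ = 2⁻¹ * (∫⁻ x, ENNReal.ofReal (small x) ∂ν + (∫⁻ x, ENNReal.ofReal (Ψ (g x)) ∂ν) * c) := by
        rw [lintegral_const_mul' _ _ (by simp), lintegral_add_right' _ (hG.mul_const c),
          lintegral_mul_const' _ _ ENNReal.ofReal_ne_top]
    _ ≤ 2⁻¹ * (ENNReal.ofReal (v ^ lam) + ENNReal.ofReal (v ^ μ) * c) := by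
        gcongr
        exact lintegral_ite_rpow_le (hΨ.continuous.comp_aemeasurable_of_nonneg hg hg0)
          (fun x => hΨ.nonneg (hg0 x)) hv hν hlam hμ hint
    _ = ENNReal.ofReal (v ^ lam) := by
        rw [← ENNReal.ofReal_mul (by positivity), ← Real.rpow_add hv, add_sub_cancel, ← two_mul,
          ← mul_assoc, ENNReal.inv_mul_cancel two_ne_zero ENNReal.ofNat_ne_top, one_mul]

theorem luxNorm_le_mul_of_admissible {n : ℕ} {Φ Ψ : ℝ → ℝ≥0∞} {lam μ r c : ℝ}
    {f : EuclideanSpace ℝ (Fin n) → ℝ} (hc : 0 < c)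
    (h : ∀ e : ℝ, 0 < e →
      ∫⁻ x in Metric.ball 0 r, Ψ (|f x| / e)
          ≤ ENNReal.ofReal ((volume (Metric.ball (0 : EuclideanSpace ℝ (Fin n)) r)).toReal ^ μ) →
      ∫⁻ x in Metric.ball 0 r, Φ (|f x| / (c * e))
          ≤ ENNReal.ofReal ((volume (Metric.ball (0 : EuclideanSpace ℝ (Fin n)) r)).toReal ^ lam)) :
    luxNorm n Φ lam r f ≤ ENNReal.ofReal c * luxNorm n Ψ μ r f := by
  have hc0 : ENNReal.ofReal c ≠ 0 := by simpa using hc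
  conv_rhs => rw [luxNorm, sInf_eq_iInf, ENNReal.mul_iInf_of_ne hc0 ENNReal.ofReal_ne_top]
  simp_rw [ENNReal.mul_iInf_of_ne hc0 ENNReal.ofReal_ne_top]
  refine le_iInf₂ fun _ ⟨e, he, hε, hint⟩ => ?_
  rw [hε, ← ENNReal.ofReal_mul hc.le]
  exact sInf_le ⟨c * e, by positivity, rfl, h e he hint⟩

theorem centralNorm_le_mul_of_luxNorm_le {n : ℕ} {Φ Ψ : ℝ → ℝ≥0∞} {lam μ : ℝ} {c : ℝ≥0∞}
    {f : EuclideanSpace ℝ (Fin n) → ℝ}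
    (h : ∀ r, 0 < r → luxNorm n Φ lam r f ≤ c * luxNorm n Ψ μ r f) :
    centralNorm n Φ lam f ≤ c * centralNorm n Ψ μ f := by
  rw [centralNorm, centralNorm, ENNReal.mul_iSup]
  exact iSup_mono fun r => h r.1 r.2

theorem statement16_general (n : ℕ) (Φ Ψ Ψinv : ℝ → ℝ)
    (hΦ : IsOrliczFunction Φ) (hΨ : IsOrliczFunction Ψ) (hΨinv : IsOrliczInverse Ψ Ψinv)
    (lam μ : ℝ) (hlam1 : lam < 1) (hμ1 : μ < 1)
    (A₁ A₂ : ℝ) (hA₁ : 0 < A₁) (hA₂ : 0 < A₂)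
    (hi : ∀ u : ℝ, 0 < u → Φ (u / A₁) ≤ Ψ u ^ ((lam - 1) / (μ - 1)))
    (hii : ∀ u r : ℝ, 0 < u → 0 < r → Ψinv (r ^ (μ - 1)) < u →
      Φ (u / A₂) ≤ Ψ u * r ^ (lam - μ)) :
    ∀ f : EuclideanSpace ℝ (Fin n) → ℝ, MemCentralMorreyOrlicz n Ψ μ f →
      centralNorm n (fun u => ENNReal.ofReal (Φ u)) lam f
        ≤ ENNReal.ofReal (2 * max A₁ A₂)
            * centralNorm n (fun u => ENNReal.ofReal (Ψ u)) μ f := by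
  intro f hf
  set M := max A₁ A₂
  have hM : 0 < M := lt_max_of_lt_left hA₁
  have hiM : ∀ u, 0 < u → Φ (u / M) ≤ Ψ u ^ ((lam - 1) / (μ - 1)) := fun u hu =>
    (hΦ.apply_div_le_apply_div hu.le hA₁ (le_max_left _ _)).trans (hi u hu)
  have hiiM : ∀ u r, 0 < u → 0 < r → Ψinv (r ^ (μ - 1)) < u → Φ (u / M) ≤ Ψ u * r ^ (lam - μ) :=
    fun u r hu hr h => (hΦ.apply_div_le_apply_div hu.le hA₂ (le_max_right _ _)).trans
      (hii u r hu hr h)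
  refine centralNorm_le_mul_of_luxNorm_le fun r hr =>
    luxNorm_le_mul_of_admissible (by positivity) fun e he hint => ?_
  have hB : volume (Metric.ball (0 : EuclideanSpace ℝ (Fin n)) r) ≠ ⊤ := measure_ball_lt_top.ne
  have hv : 0 < (volume (Metric.ball (0 : EuclideanSpace ℝ (Fin n)) r)).toReal :=
    ENNReal.toReal_pos (Metric.measure_ball_pos _ _ hr).ne' hB
  have hdiv : ∀ x, |f x| / (2 * M * e) = |f x| / e / (2 * M) := fun x => by
    rw [div_div, mul_comm e]
  simp_rw [hdiv]
  exact lintegral_orlicz_div_le_of_lintegral_le hΦ hΨ hΨinv hlam1 hμ1 hM.le hiM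
    (fun u hu => hiiM u _ hu hv) ((hf.1.aestronglyMeasurable.aemeasurable.restrict).abs.div_const e)
    (fun x => by positivity) hv (by rw [Measure.restrict_apply_univ, ENNReal.ofReal_toReal hB])
    hint

/-- sufficiency of conditions (i) and (ii) for the embedding
M^{Ψ,μ}(0) ↪ M^{Φ,λ}(0), with constant 2 max(A₁, A₂). -/
theorem statement16 (n : ℕ) (Φ Ψ Ψinv : ℝ → ℝ)
    (hΦ : IsOrliczFunction Φ) (hΨ : IsOrliczFunction Ψ) (hΨinv : IsOrliczInverse Ψ Ψinv)
    (lam μ : ℝ) (hlam0 : 0 ≤ lam) (hlam1 : lam < 1) (hμ0 : 0 ≤ μ) (hμ1 : μ < 1)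
    (A₁ A₂ : ℝ) (hA₁ : 0 < A₁) (hA₂ : 0 < A₂)
    (hi : ∀ u : ℝ, 0 < u → Φ (u / A₁) ≤ Ψ u ^ ((lam - 1) / (μ - 1)))
    (hii : ∀ u r : ℝ, 0 < u → 0 < r → Ψinv (r ^ (μ - 1)) < u →
      Φ (u / A₂) ≤ Ψ u * r ^ (lam - μ)) :
    ∀ f : EuclideanSpace ℝ (Fin n) → ℝ, MemCentralMorreyOrlicz n Ψ μ f →
      centralNorm n (fun u => ENNReal.ofReal (Φ u)) lam f
        ≤ ENNReal.ofReal (2 * max A₁ A₂)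
            * centralNorm n (fun u => ENNReal.ofReal (Ψ u)) μ f :=
  statement16_general n Φ Ψ Ψinv hΦ hΨ hΨinv lam μ hlam1 hμ1 A₁ A₂ hA₁ hA₂ hi hii
end
end

section
/- Let Φ and Ψ be Orlicz functions and 0 ≤ λ, μ < 1. If there exists C > 0 such that ‖f‖_{M^{Φ,λ}(0)} ≤ C ‖f‖_{M^{Ψ,μ}(0)} for every f ∈ M^{Ψ,μ}(0), then Φ(u)^{(μ−1)/(λ−1)} ≤ Ψ(Cu) for all u > 0; equivalently, Φ(u/C) ≤ Ψ(u)^{(λ−1)/(μ−1)} for all u > 0. -/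
open MeasureTheory ENNReal

noncomputable section

/-! The test functions are `a · 1_{B_ρ}`. Writing `T = |B_ρ|` and `v = |B_r|`, the Ψ-integral over
`B_r` at scale `1` is `Ψ(a) · min T v`, which is at most `v^μ` for all `r` as soon as
`Ψ(a) ≤ T^(μ-1)`, so `‖a · 1_{B_ρ}‖_{M^{Ψ,μ}(0)} ≤ 1`. On `B_ρ` alone, the Φ-condition at scale `ε`
reads `Φ(a/ε) ≤ T^(λ-1)`, so if `T^(λ-1) = Φ(u)` then `‖a · 1_{B_ρ}‖_{M^{Φ,λ}(0)} ≥ a/u`.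
The embedding therefore forces `a ≤ C u` whenever `Ψ(a) ≤ Φ(u)^((μ-1)/(λ-1))`, and continuity
of `Ψ` turns this into `Φ(u)^((μ-1)/(λ-1)) ≤ Ψ(C u)`. -/

theorem IsOrliczFunction.nonneg_s17 {Φ : ℝ → ℝ} (hΦ : IsOrliczFunction Φ) {x : ℝ} (hx : 0 ≤ x) :
    0 ≤ Φ x := by
  simpa [hΦ.zero] using hΦ.strictMono.monotoneOn Set.self_mem_Ici hx hx

theorem min_mul_rpow_sub_one_le_rpow {μ T v : ℝ} (hμ0 : 0 ≤ μ) (hμ1 : μ ≤ 1)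
    (hT : 0 < T) (hv : 0 < v) : min T v * T ^ (μ - 1) ≤ v ^ μ := by
  rcases le_total T v with hTv | hvT
  · calc min T v * T ^ (μ - 1) = T ^ μ := by
          rw [min_eq_left hTv, mul_comm, Real.rpow_sub_one hT.ne']; field_simp
      _ ≤ v ^ μ := Real.rpow_le_rpow hT.le hTv hμ0
  · calc min T v * T ^ (μ - 1) ≤ v * v ^ (μ - 1) := by
          rw [min_eq_right hvT]
          exact mul_le_mul_of_nonneg_left
            (Real.rpow_le_rpow_of_nonpos hv hvT (by linarith)) hv.le
      _ = v ^ μ := by rw [Real.rpow_sub_one hv.ne']; field_simp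

theorem measure_ball_min {X : Type*} [PseudoMetricSpace X] [MeasurableSpace X]
    (μ : Measure X) (x : X) (ρ r : ℝ) :
    μ (Metric.ball x (min ρ r)) = min (μ (Metric.ball x ρ)) (μ (Metric.ball x r)) :=
  Monotone.map_min fun _ _ h => measure_mono (Metric.ball_subset_ball h)

theorem setLIntegral_ball_comp_indicator_ball {X : Type*} [PseudoMetricSpace X]
    [MeasurableSpace X] [OpensMeasurableSpace X] (μ : Measure X) (x : X)
    (Φ : ℝ → ℝ≥0∞) (hΦ : Φ 0 = 0) {a : ℝ} (ha : 0 ≤ a) (e ρ r : ℝ) :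
    ∫⁻ y in Metric.ball x r, Φ (|(Metric.ball x ρ).indicator (fun _ => a) y| / e) ∂μ
      = Φ (a / e) * min (μ (Metric.ball x ρ)) (μ (Metric.ball x r)) := by
  have hcomp : (fun y => Φ (|(Metric.ball x ρ).indicator (fun _ => a) y| / e))
      = (Metric.ball x ρ).indicator (fun _ => Φ (a / e)) := by
    funext y
    by_cases hy : y ∈ Metric.ball x ρ <;> simp [hy, abs_of_nonneg ha, hΦ]
  rw [hcomp, lintegral_indicator_const measurableSet_ball,
    Measure.restrict_apply measurableSet_ball, ← measure_ball_min]
  congr 2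
  ext y
  simp

theorem exists_addHaar_ball_eq {E : Type*} [NormedAddCommGroup E] [NormedSpace ℝ E]
    [FiniteDimensional ℝ E] [Nontrivial E] [MeasurableSpace E] [BorelSpace E]
    (μ : Measure E) [μ.IsAddHaarMeasure] (x : E) {T : ℝ} (hT : 0 < T) :
    ∃ ρ > 0, μ (Metric.ball x ρ) = ENNReal.ofReal T := by
  set d := Module.finrank ℝ E
  have hd : d ≠ 0 := Module.finrank_pos.ne'
  set c := (μ (Metric.ball (0 : E) 1)).toReal
  have hc : 0 < c := toReal_pos (Metric.measure_ball_pos μ _ one_pos).ne' measure_ball_lt_top.ne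
  refine ⟨(T / c) ^ (d : ℝ)⁻¹, by positivity, ?_⟩
  rw [Measure.addHaar_ball μ x (by positivity), Real.rpow_inv_natCast_pow (by positivity) hd,
    ← ofReal_toReal (measure_ball_lt_top (μ := μ) (x := 0) (r := 1)).ne,
    ← ofReal_mul (by positivity), div_mul_cancel₀ _ hc.ne']

section CentralMorreyOrlicz

variable {n : ℕ}

local notation "B" => Metric.ball (0 : EuclideanSpace ℝ (Fin n))

theorem centralNorm_indicator_ball_le_one {Ψ : ℝ → ℝ} (hΨ0 : Ψ 0 = 0) {μ : ℝ}
    (hμ0 : 0 ≤ μ) (hμ1 : μ ≤ 1) {a ρ : ℝ} (ha : 0 ≤ a) (hρ : 0 < ρ)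
    (hΨa : Ψ a ≤ (volume (B ρ)).toReal ^ (μ - 1)) :
    centralNorm n (fun v => ENNReal.ofReal (Ψ v)) μ ((B ρ).indicator fun _ => a) ≤ 1 := by
  refine iSup_le fun r => sInf_le ⟨1, one_pos, ofReal_one.symm, ?_⟩
  set T := (volume (B ρ)).toReal
  set v := (volume (B r)).toReal
  have hT : 0 < T := toReal_pos (Metric.measure_ball_pos volume _ hρ).ne' measure_ball_lt_top.ne
  have hv : 0 < v := toReal_pos (Metric.measure_ball_pos volume _ r.2).ne' measure_ball_lt_top.ne
  have hmin : min (volume (B ρ)) (volume (B r)) = ENNReal.ofReal (min T v) := by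
    simp only [T, v, ofReal_min, ofReal_toReal measure_ball_lt_top.ne]
  rw [setLIntegral_ball_comp_indicator_ball _ _ (fun v => ENNReal.ofReal (Ψ v)) (by simp [hΨ0])
    ha, div_one, hmin, ← ofReal_mul' (by positivity)]
  refine ofReal_le_ofReal ?_
  calc Ψ a * min T v ≤ T ^ (μ - 1) * min T v := by gcongr
    _ ≤ v ^ μ := by rw [mul_comm]; exact min_mul_rpow_sub_one_le_rpow hμ0 hμ1 hT hv

theorem ofReal_div_le_centralNorm_indicator_ball {Φ : ℝ → ℝ} (hΦ : IsOrliczFunction Φ)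
    {lam a u ρ : ℝ} (ha : 0 ≤ a) (hu : 0 < u) (hρ : 0 < ρ)
    (hΦu : (volume (B ρ)).toReal ^ (lam - 1) ≤ Φ u) :
    ENNReal.ofReal (a / u)
      ≤ centralNorm n (fun v => ENNReal.ofReal (Φ v)) lam ((B ρ).indicator fun _ => a) := by
  refine le_trans ?_ (le_iSup _ (⟨ρ, hρ⟩ : {r : ℝ // 0 < r}))
  refine le_sInf fun ε ⟨e, he, hε, hle⟩ => hε ▸ ofReal_le_ofReal ?_
  set T := (volume (B ρ)).toReal
  have hT : 0 < T := toReal_pos (Metric.measure_ball_pos volume _ hρ).ne' measure_ball_lt_top.ne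
  rw [setLIntegral_ball_comp_indicator_ball _ _ (fun v => ENNReal.ofReal (Φ v))
    (by simp [hΦ.zero]) ha, min_self, ← ofReal_toReal measure_ball_lt_top.ne,
    ← ofReal_mul' hT.le, ofReal_le_ofReal_iff (by positivity)] at hle
  have hΦle : Φ (a / e) ≤ Φ u := by
    have : Φ (a / e) * T ≤ Φ u * T := by
      calc Φ (a / e) * T ≤ T ^ lam := hle
        _ = T ^ (lam - 1) * T := by rw [Real.rpow_sub_one hT.ne']; field_simp
        _ ≤ Φ u * T := by gcongr
    exact le_of_mul_le_mul_right this hT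
  have hae : a / e ≤ u :=
    (hΦ.strictMono.le_iff_le (Set.mem_Ici.mpr (by positivity)) (Set.mem_Ici.mpr hu.le)).mp hΦle
  exact (div_le_iff₀' hu).mpr ((div_le_iff₀ he).mp hae)

theorem le_mul_of_centralNorm_le (hn : 0 < n) {Φ Ψ : ℝ → ℝ} (hΦ : IsOrliczFunction Φ)
    (hΨ0 : Ψ 0 = 0) {lam μ : ℝ} (hμ0 : 0 ≤ μ) (hμ1 : μ ≤ 1) {C : ℝ} (hC : 0 ≤ C)
    (hemb : ∀ f : EuclideanSpace ℝ (Fin n) → ℝ, MemCentralMorreyOrlicz n Ψ μ f →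
      centralNorm n (fun u => ENNReal.ofReal (Φ u)) lam f
        ≤ ENNReal.ofReal C * centralNorm n (fun u => ENNReal.ofReal (Ψ u)) μ f)
    {T a u : ℝ} (hT : 0 < T) (ha : 0 ≤ a) (hu : 0 < u)
    (hΦu : T ^ (lam - 1) ≤ Φ u) (hΨa : Ψ a ≤ T ^ (μ - 1)) : a ≤ C * u := by
  have : Nontrivial (EuclideanSpace ℝ (Fin n)) :=
    Module.nontrivial_of_finrank_pos (R := ℝ) (by simpa using hn)
  obtain ⟨ρ, hρ, hvol⟩ := exists_addHaar_ball_eq volume (0 : EuclideanSpace ℝ (Fin n)) hT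
  have hTρ : (volume (B ρ)).toReal = T := by rw [hvol, toReal_ofReal hT.le]
  set f := (B ρ).indicator fun _ => a
  have hΨf := centralNorm_indicator_ball_le_one hΨ0 hμ0 hμ1 ha hρ (hTρ ▸ hΨa)
  have hmem : MemCentralMorreyOrlicz n Ψ μ f :=
    ⟨((integrable_indicator_iff measurableSet_ball).mpr
        (integrableOn_const measure_ball_lt_top.ne)).locallyIntegrable,
      hΨf.trans_lt one_lt_top⟩
  have : ENNReal.ofReal (a / u) ≤ ENNReal.ofReal C :=
    calc ENNReal.ofReal (a / u)
        ≤ centralNorm n (fun v => ENNReal.ofReal (Φ v)) lam f :=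
          ofReal_div_le_centralNorm_indicator_ball hΦ ha hu hρ (hTρ ▸ hΦu)
      _ ≤ ENNReal.ofReal C * centralNorm n (fun v => ENNReal.ofReal (Ψ v)) μ f := hemb f hmem
      _ ≤ ENNReal.ofReal C := by simpa using mul_le_mul_right hΨf (ENNReal.ofReal C)
  exact (div_le_iff₀ hu).mp ((ofReal_le_ofReal_iff hC).mp this)

theorem rpow_le_of_centralNorm_le (hn : 0 < n) {Φ Ψ : ℝ → ℝ} (hΦ : IsOrliczFunction Φ)
    (hΨ : IsOrliczFunction Ψ) {lam μ : ℝ} (hlam1 : lam ≠ 1) (hμ0 : 0 ≤ μ) (hμ1 : μ ≤ 1)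
    {C : ℝ} (hC : 0 ≤ C)
    (hemb : ∀ f : EuclideanSpace ℝ (Fin n) → ℝ, MemCentralMorreyOrlicz n Ψ μ f →
      centralNorm n (fun u => ENNReal.ofReal (Φ u)) lam f
        ≤ ENNReal.ofReal C * centralNorm n (fun u => ENNReal.ofReal (Ψ u)) μ f)
    {u : ℝ} (hu : 0 < u) : Φ u ^ ((μ - 1) / (lam - 1)) ≤ Ψ (C * u) := by
  have hΦu : 0 < Φ u := hΦ.zero ▸ hΦ.strictMono Set.self_mem_Ici hu.le hu
  set T := Φ u ^ (lam - 1)⁻¹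
  have hT : 0 < T := by positivity
  have hTlam : T ^ (lam - 1) = Φ u := by
    rw [← Real.rpow_mul hΦu.le, inv_mul_cancel₀ (sub_ne_zero.mpr hlam1), Real.rpow_one]
  have hTμ : T ^ (μ - 1) = Φ u ^ ((μ - 1) / (lam - 1)) := by
    rw [← Real.rpow_mul hΦu.le, div_eq_inv_mul]
  by_contra! hlt
  rw [← hTμ] at hlt
  have hCu : 0 ≤ C * u := by positivity
  have hcont : ContinuousWithinAt Ψ (Set.Ioi (C * u)) (C * u) :=
    (hΨ.continuous (C * u) hCu).mono fun x hx => hCu.trans (le_of_lt hx)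
  obtain ⟨a, hΨa, hCua⟩ :=
    ((hcont.eventually (gt_mem_nhds hlt)).and self_mem_nhdsWithin).exists
  exact absurd (le_mul_of_centralNorm_le hn hΦ hΨ.zero hμ0 hμ1 hC hemb hT
    (hCu.trans (le_of_lt hCua)) hu hTlam.le hΨa.le) (not_le.mpr hCua)

end CentralMorreyOrlicz

theorem statement17_general (n : ℕ) (hn : 0 < n) (Φ Ψ : ℝ → ℝ)
    (hΦ : IsOrliczFunction Φ) (hΨ : IsOrliczFunction Ψ)
    (lam μ : ℝ) (hlam1 : lam < 1) (hμ0 : 0 ≤ μ) (hμ1 : μ < 1)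
    (C : ℝ) (hC : 0 < C)
    (hemb : ∀ f : EuclideanSpace ℝ (Fin n) → ℝ, MemCentralMorreyOrlicz n Ψ μ f →
      centralNorm n (fun u => ENNReal.ofReal (Φ u)) lam f
        ≤ ENNReal.ofReal C * centralNorm n (fun u => ENNReal.ofReal (Ψ u)) μ f) :
    ∀ u : ℝ, 0 < u →
      Φ u ^ ((μ - 1) / (lam - 1)) ≤ Ψ (C * u)
        ∧ Φ (u / C) ≤ Ψ u ^ ((lam - 1) / (μ - 1)) := by
  have key : ∀ u : ℝ, 0 < u → Φ u ^ ((μ - 1) / (lam - 1)) ≤ Ψ (C * u) := fun u hu =>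
    rpow_le_of_centralNorm_le hn hΦ hΨ hlam1.ne hμ0 hμ1.le hC.le hemb hu
  intro u hu
  refine ⟨key u hu, ?_⟩
  have hkey := key (u / C) (div_pos hu hC)
  rw [mul_div_cancel₀ u hC.ne'] at hkey
  rw [← inv_div (μ - 1) (lam - 1)]
  exact (Real.le_rpow_inv_iff_of_pos (hΦ.nonneg_s17 (div_pos hu hC).le) (hΨ.nonneg_s17 hu.le)
    (div_pos_of_neg_of_neg (by linarith) (by linarith))).mpr hkey

/-- if M^{Ψ,μ}(0) embeds into M^{Φ,λ}(0) with constant C, then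
Φ(u)^{(μ-1)/(λ-1)} ≤ Ψ(Cu) for all u > 0; equivalently Φ(u/C) ≤ Ψ(u)^{(λ-1)/(μ-1)}. -/
theorem statement17 (n : ℕ) (hn : 0 < n) (Φ Ψ : ℝ → ℝ)
    (hΦ : IsOrliczFunction Φ) (hΨ : IsOrliczFunction Ψ)
    (lam μ : ℝ) (hlam0 : 0 ≤ lam) (hlam1 : lam < 1) (hμ0 : 0 ≤ μ) (hμ1 : μ < 1)
    (C : ℝ) (hC : 0 < C)
    (hemb : ∀ f : EuclideanSpace ℝ (Fin n) → ℝ, MemCentralMorreyOrlicz n Ψ μ f →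
      centralNorm n (fun u => ENNReal.ofReal (Φ u)) lam f
        ≤ ENNReal.ofReal C * centralNorm n (fun u => ENNReal.ofReal (Ψ u)) μ f) :
    ∀ u : ℝ, 0 < u →
      Φ u ^ ((μ - 1) / (lam - 1)) ≤ Ψ (C * u)
        ∧ Φ (u / C) ≤ Ψ u ^ ((lam - 1) / (μ - 1)) :=
  statement17_general n hn Φ Ψ hΦ hΨ lam μ hlam1 hμ0 hμ1 C hC hemb
end
end

section
/- Let 0 < α < n, 0 < λ < 1, 1 < p_1 < p_2 < n(1−λ)/α, 1 < q_1 < q_2 < ∞, 0 < μ < 1, and define Φ(u) = max(u^{p_1}, u^{p_2}) and Ψ(u) = max(u^{q_1}, u^{q_2}). If 1/p_1 − α/n = 1/q_1, λ/p_1 < μ/q_1, 1/p_2 − α/n = 1/q_2 and λ/p_2 = μ/q_2, then there exist constants C_1, C_2 ≥ 1 such that ∫_u^∞ t^{α/n} Φ^{-1}(t^{λ−1}) dt/t ≤ C_1 Ψ^{-1}(u^{μ−1}) for all u > 0, and u^{α/n} Φ^{-1}(r^λ/u) + ∫_u^r t^{α/n} Φ^{-1}(r^λ/t) dt/t ≤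 C_2 Ψ^{-1}(r^μ/u) for all r > u > 0. -/
open MeasureTheory ENNReal

noncomputable section

/-!
Bounding `Φ⁻¹(v) = min (v ^ (1/p₁)) (v ^ (1/p₂))` by a single branch `v ^ (1/pᵢ)` turns every
integrand into a pure power of `t`, integrated explicitly; the relation `1/pᵢ - α/n = 1/qᵢ`
makes the resulting power of `u` the one in `Ψ⁻¹ = v ^ (1/qᵢ)`. Where `Ψ⁻¹` uses its `q₂`-branch
(argument at least `1`) the branch `p₂` fits exactly because `λ/p₂ = μ/q₂`; otherwise `u ≥ 1`
(resp. `r ≥ 1`, forced by `r ^ μ < u < r`) and the branch `p₁` fits because `λ/p₁ < μ/q₁`.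
-/

/-- `Φ⁻¹` for `Φ u = max (u ^ p₁) (u ^ p₂)`. -/
def invMaxRpow (p₁ p₂ v : ℝ) : ℝ := min (v ^ (1 / p₁)) (v ^ (1 / p₂))

lemma invMaxRpow_of_le_one {q₁ q₂ v : ℝ} (hq₁ : 0 < q₁) (hq₁₂ : q₁ ≤ q₂) (hv0 : 0 < v)
    (hv1 : v ≤ 1) : invMaxRpow q₁ q₂ v = v ^ (1 / q₁) :=
  min_eq_left (Real.rpow_le_rpow_of_exponent_ge hv0 hv1 (one_div_le_one_div_of_le hq₁ hq₁₂))

lemma invMaxRpow_of_one_le {q₁ q₂ v : ℝ} (hq₁ : 0 < q₁) (hq₁₂ : q₁ ≤ q₂) (hv1 : 1 ≤ v) :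
    invMaxRpow q₁ q₂ v = v ^ (1 / q₂) :=
  min_eq_right (Real.rpow_le_rpow_of_exponent_le hv1 (one_div_le_one_div_of_le hq₁ hq₁₂))

lemma rpow_rpow_one_div {x : ℝ} (hx : 0 ≤ x) (a p : ℝ) : (x ^ a) ^ (1 / p) = x ^ (a / p) := by
  rw [← Real.rpow_mul hx, mul_one_div]

lemma div_rpow_one_div {x u : ℝ} (hx : 0 ≤ x) (hu : 0 ≤ u) (q : ℝ) :
    (x / u) ^ (1 / q) = x ^ (1 / q) * u ^ (-(1 / q)) := by
  rw [Real.div_rpow hx hu, Real.rpow_neg hu, div_eq_mul_inv]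

lemma lintegral_Ioi_rpow_sub_one {u e : ℝ} (hu : 0 < u) (he : e < 0) :
    ∫⁻ t in Set.Ioi u, ENNReal.ofReal (t ^ (e - 1)) = ENNReal.ofReal (u ^ e / -e) := by
  rw [← ofReal_integral_eq_lintegral_ofReal (integrableOn_Ioi_rpow_of_lt (by linarith) hu)]
  · rw [integral_Ioi_rpow_of_lt (by linarith) hu, sub_add_cancel, neg_div, div_neg]
  · filter_upwards [ae_restrict_mem measurableSet_Ioi] with t ht
    exact Real.rpow_nonneg (hu.trans ht).le _

lemma setLIntegral_Ioi_le_of_le_rpow_sub_one {u e K : ℝ} (hu : 0 < u) (he : e < 0) (hK : 0 ≤ K)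
    {f : ℝ → ℝ≥0∞} (hf : ∀ t, u < t → f t ≤ ENNReal.ofReal (K * t ^ (e - 1))) :
    ∫⁻ t in Set.Ioi u, f t ≤ ENNReal.ofReal (K * (u ^ e / -e)) :=
  calc ∫⁻ t in Set.Ioi u, f t
      ≤ ∫⁻ t in Set.Ioi u, ENNReal.ofReal K * ENNReal.ofReal (t ^ (e - 1)) :=
        setLIntegral_mono (by fun_prop) fun t ht => (hf t ht).trans_eq (ENNReal.ofReal_mul hK)
    _ = ENNReal.ofReal (K * (u ^ e / -e)) := by
        rw [lintegral_const_mul' _ _ ENNReal.ofReal_ne_top, lintegral_Ioi_rpow_sub_one hu he,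
          ← ENNReal.ofReal_mul hK]

lemma lintegral_Ioi_rpow_mul_le {a lam p q u : ℝ} (hu : 0 < u) (hpq : a = 1 / p - 1 / q)
    (he : lam / p - 1 / q < 0) {g : ℝ → ℝ} (hg : ∀ t, 0 < t → g t ≤ (t ^ (lam - 1)) ^ (1 / p)) :
    ∫⁻ t in Set.Ioi u, ENNReal.ofReal (t ^ a * g t / t)
      ≤ ENNReal.ofReal (u ^ (lam / p - 1 / q) / -(lam / p - 1 / q)) := by
  refine (setLIntegral_Ioi_le_of_le_rpow_sub_one hu he zero_le_one fun t ht => ?_).trans_eq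
    (by rw [one_mul])
  have ht0 : 0 < t := hu.trans ht
  refine ENNReal.ofReal_le_ofReal ?_
  calc t ^ a * g t / t ≤ t ^ a * (t ^ (lam - 1)) ^ (1 / p) / t := by gcongr; exact hg t ht0
    _ = 1 * t ^ (lam / p - 1 / q - 1) := by
        rw [rpow_rpow_one_div ht0.le, div_eq_mul_inv, ← Real.rpow_neg_one, ← Real.rpow_add ht0,
          ← Real.rpow_add ht0, one_mul, hpq]
        ring_nf

lemma rpow_mul_le_of_le_div_rpow {a p q K t : ℝ} (ht : 0 < t) (hK : 0 ≤ K)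
    (hpq : a = 1 / p - 1 / q) {x : ℝ} (hx : x ≤ (K / t) ^ (1 / p)) :
    t ^ a * x ≤ K ^ (1 / p) * t ^ (-(1 / q)) :=
  calc t ^ a * x ≤ t ^ a * (K / t) ^ (1 / p) := by gcongr
    _ = K ^ (1 / p) * t ^ (-(1 / q)) := by
        rw [div_rpow_one_div hK ht.le, mul_left_comm, ← Real.rpow_add ht, hpq]
        ring_nf

lemma rpow_mul_add_lintegral_Ioi_le {a p q K u : ℝ} (hu : 0 < u) (hK : 0 ≤ K) (hq : 0 < q)
    (hpq : a = 1 / p - 1 / q) {g : ℝ → ℝ} (hg : ∀ t, 0 < t → g t ≤ (K / t) ^ (1 / p)) :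
    ENNReal.ofReal (u ^ a * g u) + ∫⁻ t in Set.Ioi u, ENNReal.ofReal (t ^ a * g t / t)
      ≤ ENNReal.ofReal ((1 + q) * (K ^ (1 / p) * u ^ (-(1 / q)))) := by
  have hKp : 0 ≤ K ^ (1 / p) := Real.rpow_nonneg hK _
  have hint := setLIntegral_Ioi_le_of_le_rpow_sub_one hu (neg_neg_of_pos (one_div_pos.2 hq)) hKp
    (f := fun t => ENNReal.ofReal (t ^ a * g t / t)) fun t ht => by
      have ht0 : 0 < t := hu.trans ht
      refine ENNReal.ofReal_le_ofReal ?_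
      rw [Real.rpow_sub_one ht0.ne', ← mul_div_assoc]
      exact div_le_div_of_nonneg_right (rpow_mul_le_of_le_div_rpow ht0 hK hpq (hg t ht0)) ht0.le
  calc _ ≤ ENNReal.ofReal (K ^ (1 / p) * u ^ (-(1 / q)))
        + ENNReal.ofReal (K ^ (1 / p) * (u ^ (-(1 / q)) / -(-(1 / q)))) :=
        add_le_add (ENNReal.ofReal_le_ofReal (rpow_mul_le_of_le_div_rpow hu hK hpq (hg u hu))) hint
    _ = ENNReal.ofReal ((1 + q) * (K ^ (1 / p) * u ^ (-(1 / q)))) := by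
        rw [← ENNReal.ofReal_add (by positivity) (by rw [neg_neg]; positivity), neg_neg]
        congr 1
        field_simp

lemma exists_lintegral_Ioi_le_invMaxRpow {a lam μ p₁ p₂ q₁ q₂ : ℝ} (hμ1 : μ < 1)
    (hq₁ : 0 < q₁) (hq₁₂ : q₁ ≤ q₂) (h₁ : a = 1 / p₁ - 1 / q₁) (h₂ : lam / p₁ < μ / q₁)
    (h₃ : a = 1 / p₂ - 1 / q₂) (h₄ : lam / p₂ = μ / q₂) :
    ∃ C, 1 ≤ C ∧ ∀ u, 0 < u →
      ∫⁻ t in Set.Ioi u, ENNReal.ofReal (t ^ a * invMaxRpow p₁ p₂ (t ^ (lam - 1)) / t)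
        ≤ ENNReal.ofReal (C * invMaxRpow q₁ q₂ (u ^ (μ - 1))) := by
  set e₁ := lam / p₁ - 1 / q₁
  set e₂ := (μ - 1) / q₂
  have he₁ : e₁ < (μ - 1) / q₁ := by rw [sub_div]; linarith
  have he₁0 : e₁ < 0 := he₁.trans (div_neg_of_neg_of_pos (by linarith) hq₁)
  have he₂ : lam / p₂ - 1 / q₂ = e₂ := by rw [h₄, ← sub_div]
  have he₂0 : e₂ < 0 := div_neg_of_neg_of_pos (by linarith) (hq₁.trans_le hq₁₂)
  refine ⟨max 1 (max (-e₁)⁻¹ (-e₂)⁻¹), le_max_left _ _, fun u hu => ?_⟩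
  rcases le_or_gt 1 u with h1u | hu1
  · rw [invMaxRpow_of_le_one hq₁ hq₁₂ (by positivity)
      (Real.rpow_le_one_of_one_le_of_nonpos h1u (by linarith)), rpow_rpow_one_div hu.le]
    refine (lintegral_Ioi_rpow_mul_le hu h₁ he₁0 fun t _ => min_le_left _ _).trans
      (ENNReal.ofReal_le_ofReal ?_)
    rw [div_eq_inv_mul]
    exact mul_le_mul (le_max_of_le_right (le_max_left _ _))
      (Real.rpow_le_rpow_of_exponent_le h1u he₁.le) (by positivity) (by positivity)
  · rw [invMaxRpow_of_one_le hq₁ hq₁₂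
      (Real.one_le_rpow_of_pos_of_le_one_of_nonpos hu hu1.le (by linarith)),
      rpow_rpow_one_div hu.le]
    refine (lintegral_Ioi_rpow_mul_le hu h₃ (he₂ ▸ he₂0) fun t _ => min_le_right _ _).trans
      (ENNReal.ofReal_le_ofReal ?_)
    rw [he₂, div_eq_inv_mul]
    exact mul_le_mul_of_nonneg_right (le_max_of_le_right (le_max_right _ _)) (by positivity)

lemma exists_add_lintegral_Ioo_le_invMaxRpow {a lam μ p₁ p₂ q₁ q₂ : ℝ} (hμ1 : μ < 1)
    (hq₁ : 0 < q₁) (hq₁₂ : q₁ ≤ q₂) (h₁ : a = 1 / p₁ - 1 / q₁) (h₂ : lam / p₁ < μ / q₁)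
    (h₃ : a = 1 / p₂ - 1 / q₂) (h₄ : lam / p₂ = μ / q₂) :
    ∃ C, 1 ≤ C ∧ ∀ u r, 0 < u → u < r →
      ENNReal.ofReal (u ^ a * invMaxRpow p₁ p₂ (r ^ lam / u))
          + ∫⁻ t in Set.Ioo u r, ENNReal.ofReal (t ^ a * invMaxRpow p₁ p₂ (r ^ lam / t) / t)
        ≤ ENNReal.ofReal (C * invMaxRpow q₁ q₂ (r ^ μ / u)) := by
  have hq₂ : 0 < q₂ := hq₁.trans_le hq₁₂
  refine ⟨1 + q₂, by linarith, fun u r hu hur => ?_⟩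
  have hr : 0 < r := hu.trans hur
  have hrlam : 0 ≤ r ^ lam := by positivity
  have hrμ : 0 ≤ r ^ μ := by positivity
  refine (add_le_add le_rfl (lintegral_mono_set Set.Ioo_subset_Ioi_self)).trans ?_
  rcases le_or_gt u (r ^ μ) with hur' | hru
  · rw [invMaxRpow_of_one_le hq₁ hq₁₂ ((one_le_div hu).2 hur'), div_rpow_one_div hrμ hu.le,
      rpow_rpow_one_div hr.le, ← h₄, ← rpow_rpow_one_div hr.le]
    exact rpow_mul_add_lintegral_Ioi_le hu hrlam hq₂ h₃ fun t _ => min_le_right _ _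
  · have hr1 : 1 ≤ r := by
      by_contra! hr1
      have := Real.rpow_lt_rpow_of_exponent_gt hr hr1 hμ1
      rw [Real.rpow_one] at this
      linarith
    rw [invMaxRpow_of_le_one hq₁ hq₁₂ (by positivity) ((div_le_one hu).2 hru.le),
      div_rpow_one_div hrμ hu.le]
    refine (rpow_mul_add_lintegral_Ioi_le hu hrlam hq₁ h₁ fun t _ => min_le_left _ _).trans
      (ENNReal.ofReal_le_ofReal ?_)
    rw [rpow_rpow_one_div hr.le, rpow_rpow_one_div hr.le]
    gcongr

theorem statement18_general (n : ℕ) (α : ℝ)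
    (lam μ : ℝ) (hμ1 : μ < 1)
    (p₁ p₂ q₁ q₂ : ℝ)
    (hq₁ : 1 < q₁) (hq₁₂ : q₁ < q₂)
    (h₁ : 1 / p₁ - α / n = 1 / q₁) (h₂ : lam / p₁ < μ / q₁)
    (h₃ : 1 / p₂ - α / n = 1 / q₂) (h₄ : lam / p₂ = μ / q₂) :
    ∃ C₁ C₂ : ℝ, 1 ≤ C₁ ∧ 1 ≤ C₂ ∧
      (∀ u : ℝ, 0 < u →
        (∫⁻ t in Set.Ioi u, ENNReal.ofReal
            (t ^ (α / n) * min ((t ^ (lam - 1)) ^ (1 / p₁)) ((t ^ (lam - 1)) ^ (1 / p₂)) / t))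
          ≤ ENNReal.ofReal (C₁ * min ((u ^ (μ - 1)) ^ (1 / q₁)) ((u ^ (μ - 1)) ^ (1 / q₂)))) ∧
      (∀ u r : ℝ, 0 < u → u < r →
        ENNReal.ofReal
            (u ^ (α / n) * min ((r ^ lam / u) ^ (1 / p₁)) ((r ^ lam / u) ^ (1 / p₂)))
            + (∫⁻ t in Set.Ioo u r, ENNReal.ofReal
                (t ^ (α / n) * min ((r ^ lam / t) ^ (1 / p₁)) ((r ^ lam / t) ^ (1 / p₂)) / t))
          ≤ ENNReal.ofReal (C₂ * min ((r ^ μ / u) ^ (1 / q₁)) ((r ^ μ / u) ^ (1 / q₂)))) := by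
  have hq₁0 : 0 < q₁ := by linarith
  have h₁' : α / n = 1 / p₁ - 1 / q₁ := by linarith
  have h₃' : α / n = 1 / p₂ - 1 / q₂ := by linarith
  obtain ⟨C₁, hC₁, h14⟩ := exists_lintegral_Ioi_le_invMaxRpow hμ1 hq₁0 hq₁₂.le h₁' h₂ h₃' h₄
  obtain ⟨C₂, hC₂, h15⟩ := exists_add_lintegral_Ioo_le_invMaxRpow hμ1 hq₁0 hq₁₂.le h₁' h₂ h₃' h₄
  exact ⟨C₁, C₂, hC₁, hC₂, h14, h15⟩

/-- for Φ(u) = max(u^{p₁}, u^{p₂}) and Ψ(u) = max(u^{q₁}, u^{q₂})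
(whose inverses are Φ⁻¹(v) = min(v^{1/p₁}, v^{1/p₂}), Ψ⁻¹(v) = min(v^{1/q₁}, v^{1/q₂})),
under the stated relations between the exponents, conditions (14) and (15-2) hold. -/
theorem statement18 (n : ℕ) (α : ℝ) (hα0 : 0 < α) (hαn : α < n)
    (lam μ : ℝ) (hlam0 : 0 < lam) (hlam1 : lam < 1) (hμ0 : 0 < μ) (hμ1 : μ < 1)
    (p₁ p₂ q₁ q₂ : ℝ) (hp₁ : 1 < p₁) (hp₁₂ : p₁ < p₂) (hp₂ : p₂ < n * (1 - lam) / α)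
    (hq₁ : 1 < q₁) (hq₁₂ : q₁ < q₂)
    (h₁ : 1 / p₁ - α / n = 1 / q₁) (h₂ : lam / p₁ < μ / q₁)
    (h₃ : 1 / p₂ - α / n = 1 / q₂) (h₄ : lam / p₂ = μ / q₂) :
    ∃ C₁ C₂ : ℝ, 1 ≤ C₁ ∧ 1 ≤ C₂ ∧
      (∀ u : ℝ, 0 < u →
        (∫⁻ t in Set.Ioi u, ENNReal.ofReal
            (t ^ (α / n) * min ((t ^ (lam - 1)) ^ (1 / p₁)) ((t ^ (lam - 1)) ^ (1 / p₂)) / t))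
          ≤ ENNReal.ofReal (C₁ * min ((u ^ (μ - 1)) ^ (1 / q₁)) ((u ^ (μ - 1)) ^ (1 / q₂)))) ∧
      (∀ u r : ℝ, 0 < u → u < r →
        ENNReal.ofReal
            (u ^ (α / n) * min ((r ^ lam / u) ^ (1 / p₁)) ((r ^ lam / u) ^ (1 / p₂)))
            + (∫⁻ t in Set.Ioo u r, ENNReal.ofReal
                (t ^ (α / n) * min ((r ^ lam / t) ^ (1 / p₁)) ((r ^ lam / t) ^ (1 / p₂)) / t))
          ≤ ENNReal.ofReal (C₂ * min ((r ^ μ / u) ^ (1 / q₁)) ((r ^ μ / u) ^ (1 / q₂)))) :=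
  statement18_general n α lam μ hμ1 p₁ p₂ q₁ q₂ hq₁ hq₁₂ h₁ h₂ h₃ h₄
end
end
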